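/- arXiv:2604.19271 — 7 statements merged into one kernel-verified Lean document; each statement's English description precedes it below -/
import Mathlib

section
/- Let S = {s_1, ..., s_n} be positive integers with total sum λ, let s_max = max_i s_i, and consider the W-TSP star instance with root v_0, leaves v_1,...,v_{n+1}, distances d(v_0,v_i)=s_i for i ≤ n and d(v_0,v_{n+1})=s_max, weights w_i = s_i for i ≤ n, w_{n+1}=s_max, w_0 = λ + s_max + 1, and cost-per-unit-distance function f(w) = 0 if w ≤ λ/2, f(w) = 1 if λ/2 < w ≤ λ + s_max, and f(w) = ∞ otherwise. If S can be partitioned into two subsets each summing to λ/2, then this W-TSP instance admits a tour of total cost at most s_max + λ. -/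
/-!
Visit the root, then the leaves of `S1`, then the heavy leaf `v_{n+1}`, then the remaining leaves,
and return to the root. Up to the last leaf of `S1` the accumulated weight is at most `λ/2`, so
these edges are free; afterwards it never exceeds `λ + s_max`, so each remaining edge costs at
most its length. In the star metric these edges pass through `v_{n+1}` once and through every leaf
outside `S1` twice, for a total of `s_max + 2 · λ/2`.
-/

open ENNReal Finset

theorem Fin.sum_univ_apply_add_one {M : Type*} [AddCommMonoid M] {N : ℕ}
    (F : Fin (N + 1) → Fin (N + 1) → M) :
    ∑ p, F p (p + 1) = F (Fin.last N) 0 + ∑ i : Fin N, F i.castSucc i.succ := by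
  simp only [Fin.sum_univ_castSucc, Fin.last_add_one, Fin.coeSucc_eq_succ, add_comm]

theorem Fin.sum_univ_succ_castSucc {M : Type*} [AddCommMonoid M] {n : ℕ} (g : Fin (n + 2) → M) :
    ∑ u, g u = g 0 + ∑ i : Fin n, g i.castSucc.succ + g (Fin.last (n + 1)) := by
  rw [Fin.sum_univ_succ, Fin.sum_univ_castSucc, Fin.succ_last]
  exact (add_assoc _ _ _).symm

section PartitionTour

variable {n : ℕ} (S1 : Finset (Fin n))

def visitClass : Fin (n + 2) → ℕ :=
  Fin.cases 0 (Fin.lastCases 2 fun i => if i ∈ S1 then 1 else 3)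

@[simp] lemma visitClass_zero : visitClass S1 0 = 0 := rfl

@[simp] lemma visitClass_leaf (i : Fin n) :
    visitClass S1 i.castSucc.succ = if i ∈ S1 then 1 else 3 := by
  simp [visitClass]

@[simp] lemma visitClass_last : visitClass S1 (Fin.last (n + 1)) = 2 := by
  simp [visitClass, ← Fin.succ_last]

lemma visitClass_eq_zero_iff {u : Fin (n + 2)} : visitClass S1 u = 0 ↔ u = 0 := by
  induction u using Fin.cases with
  | zero => simp
  | succ u => induction u using Fin.lastCases with
    | last => simp [Fin.succ_last]
    | cast i =>
      simp only [visitClass_leaf, Fin.succ_ne_zero, iff_false]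
      split_ifs <;> simp

lemma visitClass_eq_two_iff {u : Fin (n + 2)} :
    visitClass S1 u = 2 ↔ u = Fin.last (n + 1) := by
  induction u using Fin.cases with
  | zero => simp
  | succ u => induction u using Fin.lastCases with
    | last => simp [Fin.succ_last]
    | cast i =>
      have hne : i.castSucc.succ ≠ Fin.last (n + 1) := by
        rw [← Fin.succ_last]
        exact (Fin.succ_lt_succ_iff.mpr (Fin.castSucc_lt_last i)).ne
      simp only [visitClass_leaf, hne, iff_false]
      split_ifs <;> simp

lemma visitClass_le_three (u : Fin (n + 2)) : visitClass S1 u ≤ 3 := by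
  induction u using Fin.cases with
  | zero => simp
  | succ u => induction u using Fin.lastCases with
    | last => simp [Fin.succ_last]
    | cast i =>
      simp only [visitClass_leaf]
      split_ifs <;> simp

def partitionTour : Equiv.Perm (Fin (n + 2)) := Tuple.sort (visitClass S1)

lemma visitClass_partitionTour_mono {i j : Fin (n + 2)} (h : i ≤ j) :
    visitClass S1 (partitionTour S1 i) ≤ visitClass S1 (partitionTour S1 j) :=
  Tuple.monotone_sort _ h

lemma partitionTour_zero : partitionTour S1 0 = 0 := by
  have h := visitClass_partitionTour_mono S1 (Fin.zero_le ((partitionTour S1).symm 0))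
  rwa [Equiv.apply_symm_apply, visitClass_zero, Nat.le_zero, visitClass_eq_zero_iff] at h

lemma partitionTour_add_one_eq_zero_or {p : Fin (n + 2)}
    (hp : 2 ≤ visitClass S1 (partitionTour S1 p)) :
    partitionTour S1 (p + 1) = 0 ∨ 3 ≤ visitClass S1 (partitionTour S1 (p + 1)) := by
  by_cases hlast : p = Fin.last (n + 1)
  · left
    rw [hlast, Fin.last_add_one, partitionTour_zero]
  right
  have hlt : p < p + 1 := Fin.lt_add_one_iff.mpr (lt_of_le_of_ne (Fin.le_last p) hlast)
  have hmono := visitClass_partitionTour_mono S1 hlt.le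
  by_contra h
  have hp2 : visitClass S1 (partitionTour S1 p) = 2 := by omega
  have hp2' : visitClass S1 (partitionTour S1 (p + 1)) = 2 := by omega
  rw [visitClass_eq_two_iff] at hp2 hp2'
  exact hlt.ne ((partitionTour S1).injective (hp2.trans hp2'.symm))

lemma sum_Ioc_partitionTour_le (g : Fin (n + 2) → ℕ) {p : Fin (n + 2)} {m : ℕ}
    (hm : visitClass S1 (partitionTour S1 p) ≤ m) :
    ∑ j ∈ Ioc 0 p, g (partitionTour S1 j) ≤
      ∑ u, if visitClass S1 u ∈ Icc 1 m then g u else 0 := by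
  set π := partitionTour S1
  calc ∑ j ∈ Ioc 0 p, g (π j)
      ≤ ∑ j, if visitClass S1 (π j) ∈ Icc 1 m then g (π j) else 0 := by
        rw [← sum_filter]
        refine sum_le_sum_of_subset fun j hj => ?_
        obtain ⟨hj0, hjp⟩ := mem_Ioc.mp hj
        have hπj : visitClass S1 (π j) ≠ 0 := by
          rw [Ne, visitClass_eq_zero_iff, ← partitionTour_zero S1]
          exact π.injective.ne hj0.ne'
        simp only [mem_filter, mem_univ, true_and, mem_Icc]
        exact ⟨Nat.one_le_iff_ne_zero.mpr hπj,
          (visitClass_partitionTour_mono S1 hjp).trans hm⟩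
    _ = ∑ u, if visitClass S1 u ∈ Icc 1 m then g u else 0 :=
        Equiv.sum_comp π fun u => if visitClass S1 u ∈ Icc 1 m then g u else 0

variable {s : Fin n → ℕ} {smax : ℕ} {g : Fin (n + 2) → ℕ}
  (hleaf : ∀ i : Fin n, g i.castSucc.succ = s i) (hlast : g (Fin.last (n + 1)) = smax)
include hleaf hlast

lemma sum_ite_visitClass (Q : ℕ → Prop) [DecidablePred Q] (hQ : ¬ Q 0) :
    ∑ u, (if Q (visitClass S1 u) then g u else 0) =
      (if Q 1 then ∑ i ∈ S1, s i else 0) + (if Q 3 then ∑ i ∈ S1ᶜ, s i else 0) +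
        if Q 2 then smax else 0 := by
  rw [Fin.sum_univ_succ_castSucc, ← sum_add_sum_compl S1]
  simp only [visitClass_zero, visitClass_leaf, visitClass_last, hleaf, hlast, hQ, if_false,
    zero_add]
  congr 2
  · rw [sum_congr rfl fun i (hi : i ∈ S1) => by rw [if_pos hi]]
    split_ifs <;> simp
  · rw [sum_congr rfl fun i (hi : i ∈ S1ᶜ) => by rw [if_neg (mem_compl.mp hi)]]
    split_ifs <;> simp

lemma sum_Ioc_partitionTour_le_sum_add (p : Fin (n + 2)) :
    ∑ j ∈ Ioc 0 p, g (partitionTour S1 j) ≤ ∑ i, s i + smax := by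
  have h := sum_Ioc_partitionTour_le S1 g (visitClass_le_three S1 (partitionTour S1 p))
  rw [sum_ite_visitClass S1 hleaf hlast _ (by simp)] at h
  rw [← sum_add_sum_compl S1 s]
  simpa using h

lemma sum_Ioc_partitionTour_le_sum_mem {p : Fin (n + 2)}
    (hp : visitClass S1 (partitionTour S1 p) ≤ 1) :
    ∑ j ∈ Ioc 0 p, g (partitionTour S1 j) ≤ ∑ i ∈ S1, s i := by
  have h := sum_Ioc_partitionTour_le S1 g hp
  rw [sum_ite_visitClass S1 hleaf hlast _ (by simp)] at h
  simpa using h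

lemma sum_partitionTour_edges_le (h0 : g 0 = 0) :
    ∑ p, (if 2 ≤ visitClass S1 (partitionTour S1 p) then
        g (partitionTour S1 p) + g (partitionTour S1 (p + 1)) else 0) ≤
      smax + 2 * ∑ i ∈ S1ᶜ, s i := by
  set π := partitionTour S1
  have hnext : ∀ p, (if 2 ≤ visitClass S1 (π p) then g (π (p + 1)) else 0) ≤
      if 3 ≤ visitClass S1 (π (p + 1)) then g (π (p + 1)) else 0 := by
    intro p
    split_ifs with h2 h3
    · exact le_rfl
    · rcases partitionTour_add_one_eq_zero_or S1 h2 with h | h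
      · simp [π, h, h0]
      · exact absurd h h3
    · exact Nat.zero_le _
    · exact le_rfl
  calc ∑ p, (if 2 ≤ visitClass S1 (π p) then g (π p) + g (π (p + 1)) else 0)
      = ∑ p, (if 2 ≤ visitClass S1 (π p) then g (π p) else 0) +
          ∑ p, (if 2 ≤ visitClass S1 (π p) then g (π (p + 1)) else 0) := by
        rw [← sum_add_distrib]
        exact sum_congr rfl fun p _ => by split_ifs <;> simp
    _ ≤ ∑ u, (if 2 ≤ visitClass S1 u then g u else 0) +
          ∑ p, (if 3 ≤ visitClass S1 (π (p + 1)) then g (π (p + 1)) else 0) := by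
        rw [Equiv.sum_comp π fun u => if 2 ≤ visitClass S1 u then g u else 0]
        gcongr with p
        exact hnext p
    _ = ∑ u, (if 2 ≤ visitClass S1 u then g u else 0) +
          ∑ u, (if 3 ≤ visitClass S1 u then g u else 0) := by
        congr 1
        exact (Equiv.sum_comp (Equiv.addRight 1) fun q =>
          if 3 ≤ visitClass S1 (π q) then g (π q) else 0).trans
          (Equiv.sum_comp π fun u => if 3 ≤ visitClass S1 u then g u else 0)
    _ = smax + 2 * ∑ i ∈ S1ᶜ, s i := by
        rw [sum_ite_visitClass S1 hleaf hlast _ (by norm_num),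
          sum_ite_visitClass S1 hleaf hlast _ (by norm_num)]
        simp only [Nat.reduceLeDiff, Nat.not_ofNat_le_one, if_true, if_false]
        ring

end PartitionTour

/-- Forward direction of the NP-hardness reduction from Partition.
Nodes are `Fin (n+2)`: node `0` is the root `v_0`, node `⟨i+1,_⟩` is the leaf `v_{i+1}`
carrying integer `s i`, and node `⟨n+1,_⟩` is the extra leaf `v_{n+1}`.
`dr` gives the distance of each node to the root, and the star metric is
`d u v = dr u + dr v` for `u ≠ v`.  The tour is a bijection from positions to nodes;
its cost is `d(π_{n+2},π_1)·f(∑_{j=2}^{n+2} w_{π_j}) + ∑_{i=1}^{n+1} d(π_i,π_{i+1})·f(∑_{j=2}^{i} w_{π_j})`.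
If the `s i` can be partitioned into two halves of equal sum, then some tour has
cost at most `s_max + λ`. -/
theorem stmt_3 (n : ℕ) (s : Fin n → ℕ)
    (lam smax : ℕ) (hlam : lam = ∑ i, s i)
    (w dr : Fin (n + 2) → ℕ)
    (hwleaf : ∀ i : Fin n, w ⟨i.val + 1, by have := i.isLt; omega⟩ = s i)
    (hwlast : w ⟨n + 1, by omega⟩ = smax)
    (hdr0 : dr 0 = 0)
    (hdrleaf : ∀ i : Fin n, dr ⟨i.val + 1, by have := i.isLt; omega⟩ = s i)
    (hdrlast : dr ⟨n + 1, by omega⟩ = smax)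
    (d : Fin (n + 2) → Fin (n + 2) → ℕ)
    (hd : ∀ u v, d u v = if u = v then 0 else dr u + dr v)
    (f : ℕ → ℝ≥0∞)
    (hf : ∀ y, f y = if 2 * y ≤ lam then 0 else if y ≤ lam + smax then 1 else ⊤)
    (S1 : Finset (Fin n)) (hpart : 2 * ∑ i ∈ S1, s i = lam) :
    ∃ π : Equiv.Perm (Fin (n + 2)),
      (d (π (Fin.last (n + 1))) (π 0) : ℝ≥0∞) *
          f (∑ j ∈ Finset.Ioc (0 : Fin (n + 2)) (Fin.last (n + 1)), w (π j)) +
        ∑ i : Fin (n + 1),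
          (d (π i.castSucc) (π i.succ) : ℝ≥0∞) *
            f (∑ j ∈ Finset.Ioc (0 : Fin (n + 2)) i.castSucc, w (π j)) ≤
      (smax : ℝ≥0∞) + (lam : ℝ≥0∞) := by
  set π := partitionTour S1
  have hsplit : ∑ i ∈ S1, s i + ∑ i ∈ S1ᶜ, s i = lam := by
    rw [hlam, sum_add_sum_compl]
  have hedge : ∀ p, (d (π p) (π (p + 1)) : ℝ≥0∞) * f (∑ j ∈ Ioc 0 p, w (π j)) ≤
      ((if 2 ≤ visitClass S1 (π p) then dr (π p) + dr (π (p + 1)) else 0 : ℕ) : ℝ≥0∞) := by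
    intro p
    split_ifs with hp
    · have hd_le : d (π p) (π (p + 1)) ≤ dr (π p) + dr (π (p + 1)) := by
        rw [hd]
        split_ifs <;> simp
      have hf_le : f (∑ j ∈ Ioc 0 p, w (π j)) ≤ 1 := by
        have hle : ∑ j ∈ Ioc 0 p, w (π j) ≤ ∑ i, s i + smax :=
          sum_Ioc_partitionTour_le_sum_add S1 hwleaf hwlast p
        rw [hf]
        split_ifs
        · exact zero_le
        · exact le_rfl
        · omega
      calc _ ≤ ((dr (π p) + dr (π (p + 1)) : ℕ) : ℝ≥0∞) * 1 := by gcongr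
        _ = _ := mul_one _
    · have hle : ∑ j ∈ Ioc 0 p, w (π j) ≤ ∑ i ∈ S1, s i :=
        sum_Ioc_partitionTour_le_sum_mem S1 hwleaf hwlast (Nat.le_of_lt_succ (not_le.mp hp))
      rw [hf, if_pos (by omega), mul_zero]
      exact zero_le
  refine ⟨π, ?_⟩
  calc _ = ∑ p, (d (π p) (π (p + 1)) : ℝ≥0∞) * f (∑ j ∈ Ioc 0 p, w (π j)) :=
        (Fin.sum_univ_apply_add_one fun p q =>
          (d (π p) (π q) : ℝ≥0∞) * f (∑ j ∈ Ioc 0 p, w (π j))).symm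
    _ ≤ ∑ p, ((if 2 ≤ visitClass S1 (π p) then dr (π p) + dr (π (p + 1)) else 0 : ℕ) : ℝ≥0∞) :=
        sum_le_sum fun p _ => hedge p
    _ ≤ smax + lam := by
        rw [← Nat.cast_sum]
        exact_mod_cast (sum_partitionTour_edges_le S1 hdrleaf hdrlast hdr0).trans (by omega)
end

section
/- Let S = {s_1, ..., s_n} be positive integers with sum λ, s_max = max_i s_i. In the star W-TSP instance from the Partition reduction, if some subset S_1 ⊆ S with sum X ≤ λ/2 is visited first (cost 0), then node v_{n+1} (of weight s_max) is visited, then the rest, the remaining traversal cost is s_max + 2(λ − X), and this quantity is at most s_max + λ if and only if X = λ/2. -/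
theorem stmt_4_general (n : ℕ) (s : Fin n → ℝ)
    (lam smax : ℝ) (hlam : lam = ∑ i, s i)
    (S1 : Finset (Fin n)) (X : ℝ) (hX : X = ∑ i ∈ S1, s i) (hXhalf : X ≤ lam / 2) :
    smax + (∑ i ∈ Finset.univ \ S1, 2 * s i) = smax + 2 * (lam - X) ∧
      (smax + 2 * (lam - X) ≤ smax + lam ↔ X = lam / 2) := by
  have hcompl : ∑ i ∈ Finset.univ \ S1, s i = lam - X := by
    rw [hlam, hX, Finset.sum_sdiff_eq_sub (Finset.subset_univ S1)]
  refine ⟨by rw [← Finset.mul_sum, hcompl], ?_⟩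
  -- the bound says `X ≥ lam / 2`, the opposite of `hXhalf`
  constructor <;> intro h <;> linarith

/-- Quantitative core of the backward direction of the Partition reduction:
if a subset `S1` of total weight `X ≤ λ/2` is visited first at cost `0`, then
`v_{n+1}` (distance `s_max`, reached one-way) and afterwards the remaining leaves
(round trips at cost `1` per unit distance), the remaining traversal cost equals
`s_max + 2(λ − X)`, and this is at most `s_max + λ` iff `X = λ/2`. -/
theorem stmt_4 (n : ℕ) (s : Fin n → ℝ) (hs : ∀ i, 0 < s i)
    (lam smax : ℝ) (hlam : lam = ∑ i, s i) (hsmax : 0 < smax)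
    (S1 : Finset (Fin n)) (X : ℝ) (hX : X = ∑ i ∈ S1, s i) (hXhalf : X ≤ lam / 2) :
    smax + (∑ i ∈ Finset.univ \ S1, 2 * s i) = smax + 2 * (lam - X) ∧
      (smax + 2 * (lam - X) ≤ smax + lam ↔ X = lam / 2) :=
  stmt_4_general n s lam smax hlam S1 X hX hXhalf
end

section
/- In the W-TSP on a path metric with a fixed starting node, there exists an optimal tour π such that for all indices i < j < k (with respect to the left-to-right order of nodes on the path), the tour visits node v_i or node v_k before visiting node v_j. -/
/-- Cost of a W-TSP tour `π` (a bijection from positions to nodes) on the path metric: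
nodes `Fin (n+1)` lie on a line at coordinates `x`, node weights `w`, cost-per-unit-distance
`f` of the accumulated weight (the start node's weight is collected last). -/
noncomputable def pathTourCost (n : ℕ) (x w : Fin (n + 1) → ℝ) (f : ℝ → ℝ)
    (π : Equiv.Perm (Fin (n + 1))) : ℝ :=
  (∑ i : Fin n, f (∑ j ∈ Finset.Ioc (0 : Fin (n + 1)) i.castSucc, w (π j)) *
      |x (π i.castSucc) - x (π i.succ)|) +
    f (∑ j ∈ Finset.Ioc (0 : Fin (n + 1)) (Fin.last n), w (π j)) *
      |x (π (Fin.last n)) - x (π 0)|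

/-!
Among the optimal tours from `t`, take one minimising lexicographically the pair (cost, sum of
`n - position` over its premature nodes). Suppose some node is premature and let `b`, at position
`p`, be the one visited last. Let `q + 1` be the first position after `p` whose node lies on the
other side of `b` than the node at `p + 1`; then `b` lies between the nodes at `q` and `q + 1`.
Visiting `b` between them instead of at `p` costs no more: bypassing `b` is no longer by the
triangle inequality, the legs in between carry less weight, and the leg from `q` to `q + 1` is
merely split at `b`, its first part now carrying less weight. Afterwards every premature node
other than `b` was premature before, at the same position: a node moved one step forward lies on
the same side of `b` as its whole stretch, so it would have been premature after `p` already.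
As `b` itself now sits later, the sum strictly decreases, a contradiction.
-/

open Finset Equiv

lemma Finset.sum_lt_sum_of_erase_subset {ι M : Type*} [DecidableEq ι] [AddCommMonoid M]
    [PartialOrder M] [IsOrderedCancelAddMonoid M] [CanonicallyOrderedAdd M] {s t : Finset ι}
    {f g : ι → M} {b : ι} (hb : b ∈ t) (hst : ∀ v ∈ s, v ≠ b → v ∈ t ∧ f v = g v)
    (hlt : f b < g b) : ∑ v ∈ s, f v < ∑ v ∈ t, g v := by
  have hst' : ∀ v ∈ s.erase b, v ∈ t ∧ f v = g v :=
    fun v hv => hst v (mem_of_mem_erase hv) (ne_of_mem_erase hv)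
  calc ∑ v ∈ s, f v ≤ ∑ v ∈ insert b s, f v := sum_le_sum_of_subset (subset_insert _ _)
    _ = f b + ∑ v ∈ s.erase b, g v := by
      rw [← add_sum_erase _ _ (mem_insert_self _ _), erase_insert_eq_erase,
        sum_congr rfl fun v hv => (hst' v hv).2]
    _ < g b + ∑ v ∈ s.erase b, g v := by gcongr
    _ ≤ g b + ∑ v ∈ t.erase b, g v := (add_le_add_iff_left _).2 (sum_le_sum_of_subset
      fun v hv => mem_erase.2 ⟨ne_of_mem_erase hv, (hst' v hv).1⟩)
    _ = ∑ v ∈ t, g v := add_sum_erase _ _ hb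

lemma Finset.sum_Ioc_zero_eq_sum_range {M : Type*} [AddCommMonoid M] (φ : ℕ → M) (m : ℕ) :
    ∑ j ∈ Ioc 0 m, φ j = ∑ j ∈ range m, φ (j + 1) := by
  rw [range_eq_Ico, sum_Ico_add' φ 0 m 1, Ico_add_one_add_one_eq_Ioc]

lemma Nat.exists_forall_mem_Icc_and_not_succ {P : ℕ → Prop} {m r : ℕ} (hm : P m) (hmr : m ≤ r)
    (hr : ¬ P r) : ∃ q, m ≤ q ∧ q < r ∧ (∀ i ∈ Set.Icc m q, P i) ∧ ¬ P (q + 1) := by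
  classical
  have hex : ∃ k, ¬ P (m + k) := ⟨r - m, by rwa [Nat.add_sub_cancel' hmr]⟩
  have hk : Nat.find hex ≠ 0 := fun h => Nat.find_spec hex (by simpa [h] using hm)
  have hkr : Nat.find hex ≤ r - m := Nat.find_min' hex (by rwa [Nat.add_sub_cancel' hmr])
  refine ⟨m + Nat.find hex - 1, by omega, by omega, fun i hi => ?_, ?_⟩
  · have := Nat.find_min hex (m := i - m) (by simp only [Set.mem_Icc] at hi; omega)
    rwa [not_not, Nat.add_sub_cancel' hi.1] at this
  · simpa [show m + Nat.find hex - 1 + 1 = m + Nat.find hex by omega] using Nat.find_spec hex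

lemma Fin.val_cycleIcc_of_ne {n : ℕ} {i j k : Fin (n + 1)} (hkj : k ≠ j) :
    (Fin.cycleIcc i j k : ℕ) = if i ≤ k ∧ k < j then (k : ℕ) + 1 else k := by
  split_ifs with h
  · rw [Fin.cycleIcc_of_ge_of_lt h.1 h.2, Fin.val_add_one_of_lt (h.2.trans_le (Fin.le_last j))]
  · rcases lt_or_gt_of_ne hkj with hlt | hgt
    · rw [Fin.cycleIcc_of_lt (lt_of_not_ge fun hik => h ⟨hik, hlt⟩)]
    · rw [Fin.cycleIcc_of_gt hgt]

lemma Fin.strictMonoOn_cycleIcc {n : ℕ} {i j : Fin (n + 1)} (hij : i ≤ j) :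
    StrictMonoOn (Fin.cycleIcc i j) {j}ᶜ := by
  intro k hk l hl hkl
  rw [Fin.lt_def, Fin.val_cycleIcc_of_ne hk, Fin.val_cycleIcc_of_ne hl]
  rw [Fin.lt_def] at hkl
  have := Fin.le_def.1 hij
  have hkj := Fin.val_ne_of_ne hk
  have hlj := Fin.val_ne_of_ne hl
  split_ifs with h1 h2 h2 <;> simp only [Fin.le_def, Fin.lt_def, not_and, not_lt] at h1 h2 <;> omega

namespace PathTour

section Walk

variable {α : Type*} {x w : α → ℝ} {f : ℝ → ℝ} {g g' : ℕ → α} {p q m i : ℕ}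

def load (w : α → ℝ) (g : ℕ → α) (i : ℕ) : ℝ := ∑ j ∈ range i, w (g (j + 1))

def legCost (x w : α → ℝ) (f : ℝ → ℝ) (g : ℕ → α) (i : ℕ) : ℝ :=
  f (load w g i) * |x (g i) - x (g (i + 1))|

def walkCost (x w : α → ℝ) (f : ℝ → ℝ) (m : ℕ) (g : ℕ → α) : ℝ :=
  ∑ i ∈ range m, legCost x w f g i

lemma load_succ : load w g (i + 1) = load w g i + w (g (i + 1)) := sum_range_succ _ _

lemma load_le_load_succ (hw : ∀ v, 0 ≤ w v) : load w g i ≤ load w g (i + 1) := by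
  rw [load_succ]
  exact le_add_of_nonneg_right (hw _)

structure DelaysVisit (g g' : ℕ → α) (p q m : ℕ) : Prop where
  pos : 0 < p
  lt : p < q
  lt_bound : q < m
  apply_of_lt : ∀ i < p, g' i = g i
  apply_of_mem_Ico : ∀ i, p ≤ i → i < q → g' i = g (i + 1)
  apply_right : g' q = g p
  apply_of_gt : ∀ i, q < i → i ≤ m → g' i = g i

namespace DelaysVisit

lemma load_eq_of_lt (h : DelaysVisit g g' p q m) (hi : i < p) : load w g' i = load w g i :=
  sum_congr rfl fun j hj => by rw [h.apply_of_lt (j + 1) (by rw [mem_range] at hj; omega)]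

lemma load_add_eq (h : DelaysVisit g g' p q m) (hpi : p ≤ i) (hiq : i < q) :
    load w g' i + w (g p) = load w g (i + 1) := by
  induction i, hpi using Nat.le_induction with
  | base =>
    obtain ⟨k, rfl⟩ : ∃ k, p = k + 1 := ⟨p - 1, by have := h.pos; omega⟩
    rw [load_succ, load_succ (i := k + 1), load_succ (i := k), h.load_eq_of_lt (by omega),
      h.apply_of_mem_Ico _ le_rfl hiq]
    ring
  | succ i hpi ih =>
    rw [load_succ, load_succ (i := i + 1), ← ih (by omega), h.apply_of_mem_Ico _ (by omega) hiq]
    ring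

lemma load_right (h : DelaysVisit g g' p q m) : load w g' q = load w g q := by
  obtain ⟨k, rfl⟩ : ∃ k, q = k + 1 := ⟨q - 1, by have := h.lt; omega⟩
  rw [load_succ, h.apply_right, ← h.load_add_eq (by have := h.lt; omega) (by omega)]

lemma load_eq_of_le (h : DelaysVisit g g' p q m) (hqi : q ≤ i) (him : i ≤ m) :
    load w g' i = load w g i := by
  induction i, hqi using Nat.le_induction with
  | base => exact h.load_right
  | succ i hqi ih =>
    rw [load_succ, load_succ (g := g), ih (by omega), h.apply_of_gt _ (by omega) him]

lemma legCost_eq_of_lt (h : DelaysVisit g g' p q m) (hi : i + 1 < p) :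
    legCost x w f g' i = legCost x w f g i := by
  rw [legCost, legCost, h.load_eq_of_lt (by omega), h.apply_of_lt i (by omega),
    h.apply_of_lt (i + 1) hi]

lemma legCost_eq_of_gt (h : DelaysVisit g g' p q m) (hqi : q < i) (him : i < m) :
    legCost x w f g' i = legCost x w f g i := by
  rw [legCost, legCost, h.load_eq_of_le hqi.le him.le, h.apply_of_gt i hqi him.le,
    h.apply_of_gt (i + 1) (by omega) him]

lemma legCost_le_add (h : DelaysVisit g g' p q m) (hw : ∀ v, 0 ≤ w v) (hf : Monotone f)
    (hf0 : ∀ y, 0 ≤ f y) (hi : i + 1 = p) :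
    legCost x w f g' i ≤ legCost x w f g i + legCost x w f g (i + 1) := by
  rw [legCost, legCost, legCost, h.load_eq_of_lt (by omega), h.apply_of_lt i (by omega),
    h.apply_of_mem_Ico (i + 1) hi.ge (by have := h.lt; omega)]
  calc f (load w g i) * |x (g i) - x (g (i + 1 + 1))|
      ≤ f (load w g i) * (|x (g i) - x (g (i + 1))| + |x (g (i + 1)) - x (g (i + 1 + 1))|) :=
        mul_le_mul_of_nonneg_left (abs_sub_le _ _ _) (hf0 _)
    _ ≤ _ := by
        rw [mul_add]
        gcongr
        exact hf (load_le_load_succ hw)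

lemma legCost_le_succ (h : DelaysVisit g g' p q m) (hw : ∀ v, 0 ≤ w v) (hf : Monotone f)
    (hpi : p ≤ i) (hiq : i + 1 < q) :
    legCost x w f g' i ≤ legCost x w f g (i + 1) := by
  rw [legCost, legCost, h.apply_of_mem_Ico i hpi (by omega),
    h.apply_of_mem_Ico (i + 1) (by omega) hiq, ← h.load_add_eq hpi (by omega)]
  gcongr
  exact hf (by linarith [hw (g p)])

lemma legCost_add_legCost_le (h : DelaysVisit g g' p q m) (hw : ∀ v, 0 ≤ w v) (hf : Monotone f)
    (hi : i + 1 = q) (hbtw : x (g p) ∈ Set.uIcc (x (g q)) (x (g (q + 1)))) :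
    legCost x w f g' i + legCost x w f g' (i + 1) ≤ legCost x w f g (i + 1) := by
  subst hi
  have hsplit : |x (g (i + 1)) - x (g p)| + |x (g p) - x (g (i + 1 + 1))|
      = |x (g (i + 1)) - x (g (i + 1 + 1))| := by
    have := dist_add_dist_of_mem_segment (by rwa [segment_eq_uIcc] : x (g p) ∈ _)
    rwa [Real.dist_eq, Real.dist_eq, Real.dist_eq] at this
  rw [legCost, legCost, legCost, h.load_right, h.apply_right, ← hsplit, mul_add,
    h.apply_of_mem_Ico i (by have := h.lt; omega) (by omega),
    h.apply_of_gt (i + 1 + 1) (by omega) (by have := h.lt_bound; omega)]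
  have hload := h.load_add_eq (w := w) (i := i) (by have := h.lt; omega) (by omega)
  gcongr
  exact hf (by linarith [hw (g p)])

theorem walkCost_le (h : DelaysVisit g g' p q m) (hw : ∀ v, 0 ≤ w v) (hf : Monotone f)
    (hf0 : ∀ y, 0 ≤ f y) (hbtw : x (g p) ∈ Set.uIcc (x (g q)) (x (g (q + 1)))) :
    walkCost x w f m g' ≤ walkCost x w f m g := by
  obtain ⟨k, rfl⟩ : ∃ k, p = k + 1 := ⟨p - 1, by have := h.pos; omega⟩
  obtain ⟨l, rfl⟩ : ∃ l, q = k + l + 1 + 1 := ⟨q - k - 2, by have := h.lt; omega⟩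
  obtain ⟨r, rfl⟩ : ∃ r, m = k + (l + 1 + 1 + 1) + r :=
    ⟨m - k - l - 3, by have := h.lt_bound; omega⟩
  have hbefore : ∑ i ∈ range k, legCost x w f g' i = ∑ i ∈ range k, legCost x w f g i :=
    sum_congr rfl fun i hi => h.legCost_eq_of_lt (by rw [mem_range] at hi; omega)
  have hafter : ∑ i ∈ range r, legCost x w f g' (k + (l + 1 + 1 + 1) + i)
      = ∑ i ∈ range r, legCost x w f g (k + (l + 1 + 1 + 1) + i) :=
    sum_congr rfl fun i hi => h.legCost_eq_of_gt (by omega) (by rw [mem_range] at hi; omega)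
  have hshift : ∑ i ∈ range l, legCost x w f g' (k + (i + 1))
      ≤ ∑ i ∈ range l, legCost x w f g (k + (i + 1 + 1)) :=
    sum_le_sum fun i hi => h.legCost_le_succ hw hf (by omega) (by rw [mem_range] at hi; omega)
  have hleave := h.legCost_le_add (x := x) hw hf hf0 (i := k) rfl
  have harrive := h.legCost_add_legCost_le hw hf (i := k + l + 1) rfl hbtw
  simp only [walkCost, sum_range_add _ (k + (l + 1 + 1 + 1)) r, sum_range_add _ k (l + 1 + 1 + 1)]
  rw [sum_range_succ (fun i => legCost x w f g' (k + i)), sum_range_succ _ (l + 1),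
    sum_range_succ' _ l, sum_range_succ (fun i => legCost x w f g (k + i)),
    sum_range_succ' _ (l + 1), sum_range_succ' _ l]
  simp only [add_zero, zero_add]
  rw [show k + (l + 2) = k + l + 1 + 1 by ring, show k + (l + 1) = k + l + 1 by ring]
  linarith

end DelaysVisit

end Walk

variable {n : ℕ}

section Tour

open Fin.NatCast

lemma sum_Ioc_zero_eq_load (w : Fin (n + 1) → ℝ) (σ : Perm (Fin (n + 1))) (m : Fin (n + 1)) :
    ∑ j ∈ Ioc 0 m, w (σ j) = load w (fun i : ℕ => σ i) m := by
  rw [load, ← sum_Ioc_zero_eq_sum_range (fun j : ℕ => w (σ j)),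
    show Ioc 0 (m : ℕ) = (Ioc 0 m).map Fin.valEmbedding by
      rw [Fin.map_valEmbedding_Ioc, Fin.val_zero],
    sum_map]
  simp

-- Positions are read modulo `n + 1`, so the closing leg back to `π 0` is leg `n` of the walk.
lemma pathTourCost_eq_walkCost (x w : Fin (n + 1) → ℝ) (f : ℝ → ℝ) (σ : Perm (Fin (n + 1))) :
    pathTourCost n x w f σ = walkCost x w f (n + 1) (fun i : ℕ => σ i) := by
  rw [walkCost, sum_range_succ, ← Fin.sum_univ_eq_sum_range, pathTourCost]
  simp [legCost, sum_Ioc_zero_eq_load]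

lemma delaysVisit_cycleIcc_trans {α : Type*} (σ : Fin (n + 1) → α) {p q : Fin (n + 1)}
    (hp : 0 < p) (hpq : p < q) (hq : q < Fin.last n) :
    DelaysVisit (fun i : ℕ => σ i) (fun i : ℕ => σ (Fin.cycleIcc p q i)) p q (n + 1) := by
  have hcast : ∀ i : ℕ, i ≤ n → ((i : Fin (n + 1)) : ℕ) = i :=
    fun i hi => Fin.val_cast_of_lt (by omega)
  rw [Fin.lt_def] at hp hpq
  rw [Fin.lt_def, Fin.val_last] at hq
  refine ⟨hp, hpq, by omega, fun i hi => ?_, fun i hpi hiq => ?_, ?_, fun i hqi hin => ?_⟩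
  · rw [Fin.cycleIcc_of_lt (by rw [Fin.lt_def, hcast i (by omega)]; exact hi)]
  · rw [Fin.cycleIcc_of_ge_of_lt (by rw [Fin.le_def, hcast i (by omega)]; exact hpi)
      (by rw [Fin.lt_def, hcast i (by omega)]; exact hiq), Nat.cast_succ]
  · simp only [Fin.cast_val_eq_self, Fin.cycleIcc_of_last (Fin.le_def.2 hpq.le)]
  · obtain hin | rfl := Nat.lt_or_eq_of_le hin
    · rw [Fin.cycleIcc_of_gt (by rw [Fin.lt_def, hcast i (by omega)]; exact hqi)]
    · rw [Fin.natCast_self, Fin.cycleIcc_of_lt (Fin.lt_def.2 hp)]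

lemma pathTourCost_cycleIcc_trans_le {x w : Fin (n + 1) → ℝ} {f : ℝ → ℝ} (hw : ∀ v, 0 ≤ w v)
    (hf : Monotone f) (hf0 : ∀ y, 0 ≤ f y) {σ : Perm (Fin (n + 1))} {p q : Fin (n + 1)}
    (hp : 0 < p) (hpq : p < q) (hq : q < Fin.last n)
    (hbtw : x (σ p) ∈ Set.uIcc (x (σ q)) (x (σ (q + 1)))) :
    pathTourCost n x w f ((Fin.cycleIcc p q).trans σ) ≤ pathTourCost n x w f σ := by
  rw [pathTourCost_eq_walkCost, pathTourCost_eq_walkCost]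
  refine (delaysVisit_cycleIcc_trans σ hp hpq hq).walkCost_le hw hf hf0 ?_
  simpa [Fin.cast_val_eq_self] using hbtw

end Tour

section Premature

-- The start, at position `0`, is exempt: no tour from `t` can visit it later.
def IsPremature (σ : Perm (Fin (n + 1))) (v : Fin (n + 1)) : Prop :=
  0 < σ.symm v ∧ (∃ a < v, σ.symm v < σ.symm a) ∧ ∃ c > v, σ.symm v < σ.symm c

open Classical in
noncomputable def prematureRank (σ : Perm (Fin (n + 1))) : ℕ :=
  ∑ v ∈ univ.filter (IsPremature σ), ((σ.symm v).rev : ℕ)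

lemma IsPremature.of_forall_lt {σ τ : Perm (Fin (n + 1))} {v : Fin (n + 1)}
    (hv : IsPremature τ v) (h0 : 0 < σ.symm v)
    (h : ∀ u, τ.symm v < τ.symm u → σ.symm v < σ.symm u) : IsPremature σ v :=
  ⟨h0, hv.2.1.imp fun a ha => ⟨ha.1, h a ha.2⟩, hv.2.2.imp fun c hc => ⟨hc.1, h c hc.2⟩⟩

section CycleIcc

variable {σ : Perm (Fin (n + 1))} {p q : Fin (n + 1)}

lemma cycleIcc_apply_trans_symm_apply (σ : Perm (Fin (n + 1))) (p q v : Fin (n + 1)) :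
    Fin.cycleIcc p q (((Fin.cycleIcc p q).trans σ).symm v) = σ.symm v := by
  rw [symm_trans_apply, apply_symm_apply]

lemma cycleIcc_trans_symm_apply_self (hpq : p ≤ q) :
    ((Fin.cycleIcc p q).trans σ).symm (σ p) = q := by
  rw [symm_apply_eq, trans_apply, Fin.cycleIcc_of_last hpq]

lemma cycleIcc_trans_symm_apply_ne (hpq : p ≤ q) {v : Fin (n + 1)} (hv : v ≠ σ p) :
    ((Fin.cycleIcc p q).trans σ).symm v ≠ q := by
  intro h
  apply hv
  apply ((Fin.cycleIcc p q).trans σ).symm.injective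
  rw [h, cycleIcc_trans_symm_apply_self hpq]

lemma symm_lt_symm_of_cycleIcc_trans (hpq : p ≤ q) {u v : Fin (n + 1)} (hu : u ≠ σ p)
    (hv : v ≠ σ p)
    (h : ((Fin.cycleIcc p q).trans σ).symm v < ((Fin.cycleIcc p q).trans σ).symm u) :
    σ.symm v < σ.symm u := by
  rw [← cycleIcc_apply_trans_symm_apply σ p q u, ← cycleIcc_apply_trans_symm_apply σ p q v]
  exact Fin.strictMonoOn_cycleIcc hpq (cycleIcc_trans_symm_apply_ne hpq hv)
    (cycleIcc_trans_symm_apply_ne hpq hu) h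

lemma IsPremature.of_cycleIcc_trans_of_notMem_Ico (hpq : p ≤ q) {v : Fin (n + 1)}
    (hvp : v ≠ σ p) (hv : IsPremature ((Fin.cycleIcc p q).trans σ) v)
    (hj : ((Fin.cycleIcc p q).trans σ).symm v ∉ Set.Ico p q) :
    IsPremature σ v ∧ ((Fin.cycleIcc p q).trans σ).symm v = σ.symm v := by
  set σ' := (Fin.cycleIcc p q).trans σ
  have hfix : σ'.symm v = σ.symm v := by
    rw [← cycleIcc_apply_trans_symm_apply σ p q v]
    rcases lt_or_gt_of_ne (cycleIcc_trans_symm_apply_ne hpq hvp) with hlt | hgt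
    · exact (Fin.cycleIcc_of_lt (lt_of_not_ge fun h => hj ⟨h, hlt⟩)).symm
    · exact (Fin.cycleIcc_of_gt hgt).symm
  refine ⟨hv.of_forall_lt (hfix ▸ hv.1) fun u hu => ?_, hfix⟩
  by_cases hup : u = σ p
  · rw [hup, cycleIcc_trans_symm_apply_self hpq] at hu
    rw [hup, symm_apply_apply, ← hfix]
    exact lt_of_not_ge fun h => hj ⟨h, hu⟩
  · exact symm_lt_symm_of_cycleIcc_trans hpq hup hvp hu

-- Seen from a node moved one step forward, `σ (q + 1)` lies beyond `σ p`, so it is that node's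
-- witness on this side; the witness on the other side carries over.
lemma IsPremature.of_cycleIcc_trans_of_mem_Ico (hq : q < Fin.last n)
    (hbtw : ∀ i, p < i → i ≤ q → σ p ∈ Set.uIoo (σ i) (σ (q + 1))) {v : Fin (n + 1)}
    (hvp : v ≠ σ p) (hv : IsPremature ((Fin.cycleIcc p q).trans σ) v)
    (hj : ((Fin.cycleIcc p q).trans σ).symm v ∈ Set.Ico p q) :
    IsPremature σ v ∧ p < σ.symm v := by
  set σ' := (Fin.cycleIcc p q).trans σ
  have hpq : p ≤ q := hj.1.trans hj.2.le
  have hshift : σ.symm v = σ'.symm v + 1 := by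
    rw [← cycleIcc_apply_trans_symm_apply σ p q v, Fin.cycleIcc_of_ge_of_lt hj.1 hj.2]
  have hpv : p < σ.symm v := by
    rw [hshift]
    exact hj.1.trans_lt (Fin.lt_add_one_iff.2 (hj.2.trans hq))
  have hvq : σ.symm v ≤ q := by
    rw [hshift]
    exact Fin.add_one_le_of_lt hj.2
  have hvq' : σ.symm v < σ.symm (σ (q + 1)) := by
    rw [symm_apply_apply]
    exact hvq.trans_lt (Fin.lt_add_one_iff.2 hq)
  have hbv := hbtw _ hpv hvq
  rw [apply_symm_apply, Set.uIoo_eq_union] at hbv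
  obtain ⟨-, ⟨a, hav, ha⟩, ⟨c, hvc, hc⟩⟩ := hv
  refine ⟨⟨(Fin.zero_le p).trans_lt hpv, ?_⟩, hpv⟩
  rcases hbv with ⟨hvb, hbq⟩ | ⟨hqb, hbv⟩
  · exact ⟨⟨a, hav, symm_lt_symm_of_cycleIcc_trans hpq (hav.trans hvb).ne hvp ha⟩,
      ⟨σ (q + 1), hvb.trans hbq, hvq'⟩⟩
  · exact ⟨⟨σ (q + 1), hqb.trans hbv, hvq'⟩,
      ⟨c, hvc, symm_lt_symm_of_cycleIcc_trans hpq (hbv.trans hvc).ne' hvp hc⟩⟩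

end CycleIcc

open Fin.NatCast in
lemma IsPremature.exists_uIoo {σ : Perm (Fin (n + 1))} {b : Fin (n + 1)} (hb : IsPremature σ b) :
    ∃ q, σ.symm b < q ∧ q < Fin.last n ∧
      ∀ i, σ.symm b < i → i ≤ q → b ∈ Set.uIoo (σ i) (σ (q + 1)) := by
  obtain ⟨-, ⟨a, hab, ha⟩, ⟨c, hbc, hc⟩⟩ := hb
  set p := σ.symm b
  let P : ℕ → Prop := fun k => (σ k < b ↔ σ (p + 1) < b)
  obtain ⟨r, hpr, hr⟩ : ∃ r : Fin (n + 1), p < r ∧ ¬ P r := by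
    by_cases hs : σ (p + 1) < b
    · exact ⟨σ.symm c, hc, by simp [P, hs, hbc.not_gt]⟩
    · exact ⟨σ.symm a, ha, by simp [P, hs, hab]⟩
  obtain ⟨q, hpq, hqr, hsame, hswitch⟩ :=
    Nat.exists_forall_mem_Icc_and_not_succ (P := P) (by simp [P]) (Fin.lt_def.1 hpr) hr
  have hqn : q < n := by have := r.is_lt; omega
  have hqval : ((q : Fin (n + 1)) : ℕ) = q := Fin.val_cast_of_lt (by omega)
  have hne : ∀ j, p < j → σ j ≠ b := fun j hj h => hj.ne' (σ.symm_apply_eq.2 h.symm).symm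
  have hpq' : p < q := by rw [Fin.lt_def, hqval]; omega
  have hqlast : (q : Fin (n + 1)) < Fin.last n := by rw [Fin.lt_def, hqval, Fin.val_last]; exact hqn
  have hq1 : σ (q + 1) ≠ b := hne _ (hpq'.trans (Fin.lt_add_one_iff.2 hqlast))
  refine ⟨q, hpq', hqlast, fun i hpi hiq => ?_⟩
  have hi : P i := by
    simpa [P] using hsame i ⟨Fin.lt_def.1 hpi, by simpa [Fin.le_def, hqval] using hiq⟩
  have hs : ¬ P (q + 1) := hswitch
  simp only [P, Nat.cast_succ] at hi hs
  rw [Set.uIoo_eq_union, Set.mem_union, Set.mem_Ioo, Set.mem_Ioo]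
  rcases lt_or_gt_of_ne (hne i hpi) with h1 | h1 <;> rcases lt_or_gt_of_ne hq1 with h2 | h2 <;>
    simp_all [not_lt_of_gt]

lemma prematureRank_cycleIcc_trans_lt {σ : Perm (Fin (n + 1))} {p q : Fin (n + 1)}
    (hpq : p < q) (hq : q < Fin.last n)
    (hbtw : ∀ i, p < i → i ≤ q → σ p ∈ Set.uIoo (σ i) (σ (q + 1)))
    (hp : IsPremature σ (σ p)) (hmax : ∀ u, IsPremature σ u → σ.symm u ≤ p) :
    prematureRank ((Fin.cycleIcc p q).trans σ) < prematureRank σ := by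
  classical
  unfold prematureRank
  refine Finset.sum_lt_sum_of_erase_subset (b := σ p) (by simpa using hp) (fun v hv hvp => ?_) ?_
  · replace hv : IsPremature ((Fin.cycleIcc p q).trans σ) v := by simpa using hv
    by_cases hj : ((Fin.cycleIcc p q).trans σ).symm v ∈ Set.Ico p q
    · obtain ⟨hvσ, hpv⟩ := hv.of_cycleIcc_trans_of_mem_Ico hq hbtw hvp hj
      exact absurd (hmax v hvσ) hpv.not_ge
    · obtain ⟨hvσ, hpos⟩ := hv.of_cycleIcc_trans_of_notMem_Ico hpq.le hvp hj
      exact ⟨by simpa using hvσ, by rw [hpos]⟩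
  · rw [← Fin.lt_def, Fin.rev_lt_rev, cycleIcc_trans_symm_apply_self hpq.le, symm_apply_apply]
    exact hpq

lemma exists_pathTourCost_le_and_prematureRank_lt {x w : Fin (n + 1) → ℝ} {f : ℝ → ℝ}
    (hx : Monotone x) (hw : ∀ v, 0 ≤ w v) (hf : Monotone f) (hf0 : ∀ y, 0 ≤ f y)
    {σ : Perm (Fin (n + 1))} (hσ : ∃ v, IsPremature σ v) :
    ∃ σ' : Perm (Fin (n + 1)), σ' 0 = σ 0 ∧ pathTourCost n x w f σ' ≤ pathTourCost n x w f σ ∧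
      prematureRank σ' < prematureRank σ := by
  classical
  obtain ⟨b, hb, hmax⟩ : ∃ b, IsPremature σ b ∧ ∀ u, IsPremature σ u → σ.symm u ≤ σ.symm b := by
    obtain ⟨v, hv⟩ := hσ
    obtain ⟨b, hb, hmax⟩ := (univ.filter (IsPremature σ)).exists_max_image (σ.symm ·)
      ⟨v, by simpa using hv⟩
    exact ⟨b, by simpa using hb, fun u hu => hmax u (by simpa using hu)⟩
  obtain ⟨q, hpq, hq, hbtw⟩ := hb.exists_uIoo
  set p := σ.symm b
  have hp : 0 < p := hb.1
  have hσp : σ p = b := apply_symm_apply σ b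
  rw [← hσp] at hbtw hb
  refine ⟨(Fin.cycleIcc p q).trans σ, congrArg σ (Fin.cycleIcc_of_lt hp), ?_,
    prematureRank_cycleIcc_trans_lt hpq hq hbtw hb hmax⟩
  exact pathTourCost_cycleIcc_trans_le hw hf hf0 hp hpq hq
    (hx.mapsTo_uIcc (Set.uIoo_subset_uIcc_self (hbtw q hpq le_rfl)))

theorem exists_optimal_forall_not_isPremature {x w : Fin (n + 1) → ℝ} {f : ℝ → ℝ}
    (hx : Monotone x) (hw : ∀ v, 0 ≤ w v) (hf : Monotone f) (hf0 : ∀ y, 0 ≤ f y)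
    (t : Fin (n + 1)) :
    ∃ π : Perm (Fin (n + 1)), π 0 = t ∧
      (∀ σ : Perm (Fin (n + 1)), σ 0 = t → pathTourCost n x w f π ≤ pathTourCost n x w f σ) ∧
      ∀ v, ¬ IsPremature π v := by
  obtain ⟨π, hπ, hmin⟩ := (univ.filter fun σ : Perm (Fin (n + 1)) => σ 0 = t).exists_min_image
    (fun σ => toLex (pathTourCost n x w f σ, prematureRank σ)) ⟨swap 0 t, by simp⟩
  simp only [mem_filter, mem_univ, true_and] at hπ hmin
  refine ⟨π, hπ, fun σ hσ => Prod.Lex.monotone_fst _ _ (hmin σ hσ), fun v hv => ?_⟩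
  obtain ⟨σ, hσ, hcost, hrank⟩ := exists_pathTourCost_le_and_prematureRank_lt hx hw hf hf0 ⟨v, hv⟩
  refine (hmin σ (hσ.trans hπ)).not_gt (Prod.Lex.toLex_lt_toLex.2 ?_)
  exact hcost.lt_or_eq.imp id fun h => ⟨h, hrank⟩

end Premature

end PathTour

/-- No-premature-visit lemma: on a path metric with fixed start `t`, there is an optimal
tour such that for every `a < b < c` (left-to-right order of nodes), `v_a` or `v_c` is
visited before `v_b` (for `b` other than the start node). -/
theorem stmt_6 (n : ℕ) (x w : Fin (n + 1) → ℝ) (hx : Monotone x) (hw : ∀ v, 0 ≤ w v)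
    (f : ℝ → ℝ) (hf : Monotone f) (hf0 : ∀ y, 0 ≤ f y) (t : Fin (n + 1)) :
    ∃ π : Equiv.Perm (Fin (n + 1)), π 0 = t ∧
      (∀ σ : Equiv.Perm (Fin (n + 1)), σ 0 = t →
        pathTourCost n x w f π ≤ pathTourCost n x w f σ) ∧
      ∀ a b c : Fin (n + 1), a < b → b < c → b ≠ t →
        (π.symm a < π.symm b ∨ π.symm c < π.symm b) := by
  obtain ⟨π, hπ, hopt, hnot⟩ := PathTour.exists_optimal_forall_not_isPremature hx hw hf hf0 t
  refine ⟨π, hπ, hopt, fun a b c hab hbc hbt => ?_⟩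
  have hb : 0 < π.symm b := by
    refine Fin.pos_of_ne_zero fun h => hbt ?_
    rw [← hπ, ← h, apply_symm_apply]
  by_contra! h
  exact hnot b ⟨hb, ⟨a, hab, h.1.lt_of_ne (π.symm.injective.ne hab.ne')⟩,
    ⟨c, hbc, h.2.lt_of_ne (π.symm.injective.ne hbc.ne)⟩⟩
end

section
/- On a path metric, there exists an optimal W-TSP tour such that at every step, the next node visited among the remaining unvisited nodes is either the leftmost or the rightmost of the remaining unvisited nodes. -/
open Finset

lemma abs_sub_add_abs_sub_of_mem_uIcc {G : Type*} [AddCommGroup G] [LinearOrder G]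
    [IsOrderedAddMonoid G] {a b c : G} (h : b ∈ Set.uIcc a c) : |a - b| + |b - c| = |a - c| := by
  rcases Set.mem_uIcc.1 h with ⟨h₁, h₂⟩ | ⟨h₁, h₂⟩
  · rw [abs_of_nonpos (sub_nonpos.2 h₁), abs_of_nonpos (sub_nonpos.2 h₂),
      abs_of_nonpos (sub_nonpos.2 (h₁.trans h₂))]
    abel
  · rw [abs_of_nonneg (sub_nonneg.2 h₂), abs_of_nonneg (sub_nonneg.2 h₁),
      abs_of_nonneg (sub_nonneg.2 (h₁.trans h₂))]
    abel

lemma Fin.sum_Ioc_zero_succ {M : Type*} [AddCommMonoid M] {m : ℕ} (h : Fin (m + 2) → M)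
    (k : Fin (m + 1)) :
    ∑ j ∈ Ioc 0 k.succ, h j = h (Fin.succ 0) + ∑ j ∈ Ioc 0 k, h j.succ := by
  rw [← Fin.map_succEmb_Iic, sum_map, ← Finset.Icc_bot, Icc_eq_cons_Ioc bot_le, Finset.sum_cons]
  rfl

lemma List.exists_mem_forall_le {α β : Type*} [LinearOrder β] (y : α → β) {l : List α}
    (hl : l ≠ []) :
    ∃ m ∈ l, ∀ u ∈ l, y m ≤ y u := by
  classical
  obtain ⟨m, hm, h⟩ := l.toFinset.exists_min_image y (List.toFinset_nonempty_iff _ |>.2 hl)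
  exact ⟨m, List.mem_toFinset.1 hm, fun u hu => h u (List.mem_toFinset.2 hu)⟩

namespace WeightedPathTour

variable {α : Type*} (x w : α → ℝ) (f : ℝ → ℝ)

def walkCost : ℝ → α → List α → ℝ
  | _, _, [] => 0
  | W, u, v :: l => f W * |x u - x v| + walkCost (W + w v) v l

@[simp] lemma walkCost_nil (W : ℝ) (u : α) : walkCost x w f W u [] = 0 := rfl

@[simp] lemma walkCost_cons (W : ℝ) (u v : α) (l : List α) :
    walkCost x w f W u (v :: l) = f W * |x u - x v| + walkCost x w f (W + w v) v l := rfl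

def IsExtremeIn (v : α) (l : List α) : Prop :=
  (∀ u ∈ l, x v ≤ x u) ∨ (∀ u ∈ l, x u ≤ x v)

def IsZigzag : List α → Prop
  | [] => True
  | v :: l => IsExtremeIn x v l ∧ IsZigzag l

variable {x w f}

lemma IsExtremeIn.of_subset {v : α} {l l' : List α} (h : IsExtremeIn x v l) (hl : l' ⊆ l) :
    IsExtremeIn x v l' :=
  h.imp (fun h u hu => h u (hl hu)) (fun h u hu => h u (hl hu))

lemma walkCost_cons_le_cons (hf : Monotone f) {δ : ℝ} (hδ : 0 ≤ δ) {d : α} {l l' : List α}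
    (h : ∀ W, walkCost x w f W d l' ≤ walkCost x w f (W + δ) d l) (W : ℝ) (a : α) :
    walkCost x w f W a (d :: l') ≤ walkCost x w f (W + δ) a (d :: l) := by
  simp only [walkCost_cons, add_right_comm W δ]
  gcongr
  · exact hf (le_add_of_nonneg_right hδ)
  · exact h _

lemma walkCost_insert_between (hf : Monotone f) {b t c : α} (ht : 0 ≤ w t)
    (hbtc : x t ∈ Set.uIcc (x b) (x c)) (R : List α) (W : ℝ) :
    walkCost x w f W b (t :: c :: R) ≤ walkCost x w f (W + w t) b (c :: R) := by
  simp only [walkCost_cons, ← abs_sub_add_abs_sub_of_mem_uIcc hbtc, mul_add, ← add_assoc]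
  gcongr
  exact hf (le_add_of_nonneg_right ht)

lemma walkCost_append_insert_between (hf : Monotone f) {b t c : α} (ht : 0 ≤ w t)
    (hbtc : x t ∈ Set.uIcc (x b) (x c)) (R D : List α) (W : ℝ) (a : α) :
    walkCost x w f W a (D ++ b :: t :: c :: R) ≤
      walkCost x w f (W + w t) a (D ++ b :: c :: R) := by
  induction D generalizing W a with
  | nil => exact walkCost_cons_le_cons hf ht (walkCost_insert_between hf ht hbtc R) W a
  | cons d D ih => exact walkCost_cons_le_cons hf ht (fun W => ih W d) W a

lemma walkCost_skip_le (hf : Monotone f) (hf0 : ∀ y, 0 ≤ f y) {t d : α} (ht : 0 ≤ w t)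
    {l l' : List α} (h : ∀ W, walkCost x w f W d l' ≤ walkCost x w f (W + w t) d l)
    (W : ℝ) (a : α) :
    walkCost x w f W a (d :: l') ≤ walkCost x w f W a (t :: d :: l) := by
  simp only [walkCost_cons, add_right_comm W (w t), ← add_assoc]
  have htri : f W * |x a - x d| ≤ f W * |x a - x t| + f W * |x t - x d| := by
    rw [← mul_add]; exact mul_le_mul_of_nonneg_left (abs_sub_le _ _ _) (hf0 W)
  have hmono : f W * |x t - x d| ≤ f (W + w t) * |x t - x d| :=
    mul_le_mul_of_nonneg_right (hf (le_add_of_nonneg_right ht)) (abs_nonneg _)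
  linarith [h (W + w d)]

lemma walkCost_delay_le (hf : Monotone f) (hf0 : ∀ y, 0 ≤ f y) {b t c : α} (ht : 0 ≤ w t)
    (hbtc : x t ∈ Set.uIcc (x b) (x c)) (D R : List α) (W : ℝ) (a : α) :
    walkCost x w f W a (D ++ b :: t :: c :: R) ≤ walkCost x w f W a (t :: D ++ b :: c :: R) := by
  cases D with
  | nil => exact walkCost_skip_le hf hf0 ht (walkCost_insert_between hf ht hbtc R) W a
  | cons d D =>
    exact walkCost_skip_le hf hf0 ht
      (fun W => walkCost_append_insert_between hf ht hbtc R D W d) W a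

lemma exists_consecutive_le_le (y : α → ℝ) (t : α) (C : List α) :
    ∀ m u, y m ≤ y t → u ∈ m :: C → y t < y u →
      ∃ D b c E, m :: C = D ++ b :: c :: E ∧ y b ≤ y t ∧ y t ≤ y c := by
  induction C with
  | nil =>
    intro m u hm hu hut
    rw [List.mem_singleton.1 hu] at hut
    exact absurd hm (not_le.2 hut)
  | cons c C ih =>
    intro m u hm hu hut
    by_cases hc : y t ≤ y c
    · exact ⟨[], m, c, C, rfl, hm, hc⟩
    · have hu' : u ∈ c :: C := by
        rcases List.mem_cons.1 hu with rfl | hu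
        · exact absurd hm (not_le.2 hut)
        · exact hu
      obtain ⟨D, b, c', E, hsplit, hb, hc'⟩ := ih c u (le_of_not_ge hc) hu' hut
      exact ⟨m :: D, b, c', E, by rw [hsplit]; rfl, hb, hc'⟩

lemma exists_consecutive_mem_uIcc {B C : List α} {m t : α} (hm : IsExtremeIn x m (B ++ m :: C))
    (hB : ∀ v ∈ B, ¬ IsExtremeIn x v (B ++ m :: C)) (ht : t ∈ B) :
    ∃ D b c E, m :: C = D ++ b :: c :: E ∧ x t ∈ Set.uIcc (x b) (x c) := by
  have hne : B ++ m :: C ≠ [] := by simp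
  have htL : t ∈ B ++ m :: C := List.mem_append_left _ ht
  have hnot := hB t ht
  simp only [IsExtremeIn, not_or, not_forall, not_le, exists_prop] at hnot
  obtain ⟨⟨u₁, hu₁, h₁⟩, u₂, hu₂, h₂⟩ := hnot
  have mem_of_extreme : ∀ v ∈ B ++ m :: C, IsExtremeIn x v (B ++ m :: C) → v ∈ m :: C :=
    fun v hv hext => (List.mem_append.1 hv).resolve_left (fun h => hB v h hext)
  rcases hm with hmin | hmax
  · obtain ⟨M, hML, hM⟩ := List.exists_mem_forall_le (fun v => -x v) hne
    simp only [neg_le_neg_iff] at hM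
    obtain ⟨D, b, c, E, hsplit, hb, hc⟩ := exists_consecutive_le_le x t C m M (hmin t htL)
      (mem_of_extreme M hML (Or.inr hM)) (h₂.trans_le (hM u₂ hu₂))
    exact ⟨D, b, c, E, hsplit, Set.mem_uIcc.2 (Or.inl ⟨hb, hc⟩)⟩
  · obtain ⟨M, hML, hM⟩ := List.exists_mem_forall_le x hne
    obtain ⟨D, b, c, E, hsplit, hb, hc⟩ := exists_consecutive_le_le (fun v => -x v) t C m M
      (neg_le_neg (hmax t htL)) (mem_of_extreme M hML (Or.inl hM))
      (neg_lt_neg ((hM u₁ hu₁).trans_lt h₁))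
    exact ⟨D, b, c, E, hsplit,
      Set.mem_uIcc.2 (Or.inr ⟨neg_le_neg_iff.1 hc, neg_le_neg_iff.1 hb⟩)⟩

lemma exists_perm_extreme_head (hf : Monotone f) (hf0 : ∀ y, 0 ≤ f y) (hw : ∀ v, 0 ≤ w v)
    (W : ℝ) (a e : α) (B : List α) {m : α} (C : List α) (hm : IsExtremeIn x m (B ++ m :: C)) :
    ∃ v L, (v :: L).Perm (B ++ m :: C) ∧ IsExtremeIn x v L ∧
      walkCost x w f W a (v :: L ++ [e]) ≤ walkCost x w f W a (B ++ m :: C ++ [e]) := by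
  induction hk : B.length using Nat.strong_induction_on generalizing B m C with
  | _ k ih =>
    rcases B with _ | ⟨t, B⟩
    · exact ⟨m, C, List.Perm.refl _, hm.of_subset (by simp), le_rfl⟩
    by_cases hB : ∃ v ∈ t :: B, IsExtremeIn x v (t :: B ++ m :: C)
    · obtain ⟨v, hv, hvext⟩ := hB
      obtain ⟨B₁, B₂, hB₁⟩ := List.append_of_mem hv
      have hlen : B₁.length < k := by rw [← hk, hB₁]; simp
      simpa [hB₁] using ih _ hlen B₁ (B₂ ++ m :: C) (by simpa [hB₁] using hvext) rfl
    push Not at hB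
    obtain ⟨D, b, c, E, hsplit, hbtc⟩ := exists_consecutive_mem_uIcc hm hB List.mem_cons_self
    -- after delaying `t`, the extreme node `m` directly follows `B`, one position earlier
    obtain ⟨C', hC'⟩ : ∃ C', D ++ b :: t :: c :: E = m :: C' := by
      cases D <;> simp_all
    have hperm : (B ++ m :: C').Perm (t :: B ++ m :: C) := by
      rw [← hC', hsplit]
      simpa using List.perm_middle (l₁ := B ++ D ++ [b]) (a := t) (l₂ := c :: E)
    obtain ⟨v, L, hp, hv, hcost⟩ :=
      ih B.length (by simp [← hk]) B C' (hm.of_subset hperm.subset) rfl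
    refine ⟨v, L, hp.trans hperm, hv, hcost.trans ?_⟩
    rw [← hC', hsplit]
    simpa [List.append_assoc] using
      walkCost_delay_le hf hf0 (hw t) hbtc (B ++ D) (E ++ [e]) W a

lemma exists_perm_isZigzag (hf : Monotone f) (hf0 : ∀ y, 0 ≤ f y) (hw : ∀ v, 0 ≤ w v)
    (L : List α) (W : ℝ) (a e : α) :
    ∃ L', L'.Perm L ∧ IsZigzag x L' ∧
      walkCost x w f W a (L' ++ [e]) ≤ walkCost x w f W a (L ++ [e]) := by
  induction hn : L.length generalizing L W a with
  | zero =>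
    rw [List.length_eq_zero_iff.1 hn]
    exact ⟨[], List.Perm.nil, trivial, le_rfl⟩
  | succ n ih =>
    obtain ⟨m, hmL, hm⟩ := List.exists_mem_forall_le x (List.ne_nil_of_length_eq_add_one hn)
    obtain ⟨B, C, rfl⟩ := List.append_of_mem hmL
    obtain ⟨v, L₁, hp, hv, hcost⟩ := exists_perm_extreme_head hf hf0 hw W a e B C (Or.inl hm)
    obtain ⟨L₂, hp₂, hz, hcost₂⟩ := ih L₁ (W + w v) v
      (by have := hp.length_eq; simp only [List.length_cons] at this hn; omega)
    refine ⟨v :: L₂, (hp₂.cons v).trans hp, ⟨hv.of_subset hp₂.subset, hz⟩, ?_⟩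
    calc walkCost x w f W a (v :: L₂ ++ [e]) ≤ walkCost x w f W a (v :: L₁ ++ [e]) := by
          simpa only [List.cons_append, walkCost_cons] using add_le_add le_rfl hcost₂
      _ ≤ _ := hcost

lemma walkCost_ofFn {m : ℕ} (g : Fin (m + 1) → α) (W : ℝ) (e : α) :
    walkCost x w f W (g 0) (List.ofFn (fun i : Fin m => g i.succ) ++ [e]) =
      (∑ i : Fin m,
          f (W + ∑ j ∈ Ioc 0 i.castSucc, w (g j)) * |x (g i.castSucc) - x (g i.succ)|) +
        f (W + ∑ j ∈ Ioc 0 (Fin.last m), w (g j)) * |x (g (Fin.last m)) - x e| := by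
  induction m generalizing W with
  | zero => simp
  | succ m ih =>
    have := ih (fun i => g i.succ) (W + w (g (Fin.succ 0)))
    rw [List.ofFn_succ, List.cons_append, walkCost_cons, this, Fin.sum_univ_succ]
    simp only [← Fin.succ_castSucc, ← Fin.succ_last, Fin.sum_Ioc_zero_succ, Fin.castSucc_zero,
      Ioc_self, sum_empty, add_zero, add_assoc]

lemma IsZigzag.getElem {l : List α} (h : IsZigzag x l) {i : ℕ} (hi : i < l.length) :
    (∀ j (hj : j < l.length), i ≤ j → x l[i] ≤ x l[j]) ∨
      (∀ j (hj : j < l.length), i ≤ j → x l[j] ≤ x l[i]) := by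
  induction l generalizing i with
  | nil => exact absurd hi (by simp)
  | cons v l ih =>
    obtain ⟨hv, hl⟩ := h
    rcases i with _ | i
    · refine hv.imp (fun hv j hj _ => ?_) (fun hv j hj _ => ?_) <;> rcases j with _ | j <;>
        simp [hv, List.getElem_mem]
    · refine (ih hl (by simpa using hi)).imp (fun h j hj hij => ?_) (fun h j hj hij => ?_) <;>
        obtain ⟨j, rfl⟩ : ∃ j', j = j' + 1 := ⟨j - 1, by omega⟩ <;>
        exact h j (by simpa using hj) (by omega)

lemma IsZigzag.ofFn {n : ℕ} {g : Fin n → α} (h : IsZigzag x (List.ofFn g)) (i : Fin n) :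
    (∀ j, i ≤ j → x (g i) ≤ x (g j)) ∨ (∀ j, i ≤ j → x (g j) ≤ x (g i)) := by
  refine (h.getElem (i := i) (by simp)).imp (fun h j hij => ?_) (fun h j hij => ?_) <;>
    simpa using h j (by simp) hij

lemma exists_perm_tail_eq {n : ℕ} (π₀ : Equiv.Perm (Fin (n + 1))) {L : List (Fin (n + 1))}
    (hL : L.Perm (List.ofFn fun i : Fin n => π₀ i.succ)) :
    ∃ π : Equiv.Perm (Fin (n + 1)),
      π 0 = π₀ 0 ∧ List.ofFn (fun i : Fin n => π i.succ) = L := by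
  classical
  have hl : (π₀ 0 :: L).Perm (List.ofFn π₀) := by rw [List.ofFn_succ]; exact hL.cons _
  have hnd : (π₀ 0 :: L).Nodup := hl.nodup_iff.2 (List.nodup_ofFn.2 π₀.injective)
  have hmem : ∀ v, v ∈ π₀ 0 :: L := fun v =>
    hl.mem_iff.2 (List.mem_ofFn.2 ⟨π₀.symm v, by simp⟩)
  have hlen : (π₀ 0 :: L).length = n + 1 := by simpa using hl.length_eq
  let π : Equiv.Perm (Fin (n + 1)) :=
    (finCongr hlen.symm).trans (hnd.getEquivOfForallMemList _ hmem)
  have hπ : List.ofFn π = π₀ 0 :: L := List.ext_getElem (by simp [hlen]) (fun i h₁ h₂ => by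
    simp only [List.getElem_ofFn, π, Equiv.trans_apply, finCongr_apply,
      List.Nodup.getEquivOfForallMemList_apply, List.get_eq_getElem, Fin.val_cast])
  rw [List.ofFn_succ, List.cons.injEq] at hπ
  exact ⟨π, hπ⟩

end WeightedPathTour

open WeightedPathTour

lemma pathTourCost_eq_walkCost (n : ℕ) (x w : Fin (n + 1) → ℝ) (f : ℝ → ℝ)
    (π : Equiv.Perm (Fin (n + 1))) : pathTourCost n x w f π =
      walkCost x w f 0 (π 0) (List.ofFn (fun i : Fin n => π i.succ) ++ [π 0]) := by
  rw [walkCost_ofFn]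
  simp only [pathTourCost, zero_add]

theorem stmt_7_general (n : ℕ) (x w : Fin (n + 1) → ℝ) (hw : ∀ v, 0 ≤ w v)
    (f : ℝ → ℝ) (hf : Monotone f) (hf0 : ∀ y, 0 ≤ f y) :
    ∃ π : Equiv.Perm (Fin (n + 1)),
      (∀ σ : Equiv.Perm (Fin (n + 1)), pathTourCost n x w f π ≤ pathTourCost n x w f σ) ∧
      ∀ k : Fin (n + 1), 0 < k →
        ((∀ m, k ≤ m → x (π k) ≤ x (π m)) ∨ (∀ m, k ≤ m → x (π m) ≤ x (π k))) := by
  obtain ⟨π₀, -, hπ₀⟩ := exists_min_image univ (pathTourCost n x w f) univ_nonempty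
  obtain ⟨L, hperm, hzig, hle⟩ := exists_perm_isZigzag hf hf0 hw
    (List.ofFn fun i : Fin n => π₀ i.succ) 0 (π₀ 0) (π₀ 0)
  obtain ⟨π, hπ0, hπL⟩ := exists_perm_tail_eq π₀ hperm
  refine ⟨π, fun σ => ?_, fun k hk => ?_⟩
  · calc pathTourCost n x w f π ≤ pathTourCost n x w f π₀ := by
          rw [pathTourCost_eq_walkCost, pathTourCost_eq_walkCost, hπ0, hπL]
          exact hle
      _ ≤ pathTourCost n x w f σ := hπ₀ σ (mem_univ σ)
  · obtain ⟨k, rfl⟩ := Fin.exists_succ_eq.2 hk.ne'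
    rw [← hπL] at hzig
    refine (hzig.ofFn k).imp (fun h m hkm => ?_) (fun h m hkm => ?_) <;>
      obtain ⟨m, rfl⟩ := Fin.exists_succ_eq.2 (hk.trans_le hkm).ne' <;>
      exact h m (Fin.succ_le_succ_iff.1 hkm)

/-- On a path metric there is an optimal W-TSP tour that, at every step after the start,
next visits either the leftmost or the rightmost of the remaining unvisited nodes. -/
theorem stmt_7 (n : ℕ) (x w : Fin (n + 1) → ℝ) (hx : Monotone x) (hw : ∀ v, 0 ≤ w v)
    (f : ℝ → ℝ) (hf : Monotone f) (hf0 : ∀ y, 0 ≤ f y) :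
    ∃ π : Equiv.Perm (Fin (n + 1)),
      (∀ σ : Equiv.Perm (Fin (n + 1)), pathTourCost n x w f π ≤ pathTourCost n x w f σ) ∧
      ∀ k : Fin (n + 1), 0 < k →
        ((∀ m, k ≤ m → x (π k) ≤ x (π m)) ∨ (∀ m, k ≤ m → x (π m) ≤ x (π k))) :=
  stmt_7_general n x w hw f hf hf0
end

section
/- Exchanging a prematurely visited node does not increase tour cost: let π be a tour on a path metric visiting node v_j before both v_i (to its left) and v_k (to its right), where v_k is the last node right of v_j visited by π and v_i is visited immediately after v_k. Let π' be obtained from π by deleting the original visit of v_j and inserting v_j immediately after v_k. If f is nondecreasing and all weights are nonnegative, then T(π') ≤ T(π). -/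
theorem sum_range_le_of_exchange {M : Type*} [AddCommMonoid M] [PartialOrder M]
    [IsOrderedAddMonoid M] (A B : ℕ → M) {a c N : ℕ} (hac : a < c) (hcN : c + 1 < N)
    (h_lo : ∀ r < a, A r = B r)
    (h_first : A a ≤ B a + B (a + 1))
    (h_mid : ∀ r, a < r → r < c → A r ≤ B (r + 1))
    (h_last : A c + A (c + 1) ≤ B (c + 1))
    (h_hi : ∀ r, c + 1 < r → r < N → A r = B r) :
    ∑ r ∈ Finset.range N, A r ≤ ∑ r ∈ Finset.range N, B r := by
  have split (g : ℕ → M) : ∑ r ∈ Finset.range N, g r =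
      ∑ r ∈ Finset.range a, g r + ∑ r ∈ Finset.Ico a (c + 2), g r +
        ∑ r ∈ Finset.Ico (c + 2) N, g r := by
    rw [Finset.sum_range_add_sum_Ico _ (by omega), Finset.sum_range_add_sum_Ico _ (by omega)]
  have lo : ∑ r ∈ Finset.range a, A r = ∑ r ∈ Finset.range a, B r :=
    Finset.sum_congr rfl fun r hr => h_lo r (Finset.mem_range.mp hr)
  have hi : ∑ r ∈ Finset.Ico (c + 2) N, A r = ∑ r ∈ Finset.Ico (c + 2) N, B r :=
    Finset.sum_congr rfl fun r hr => h_hi r (Finset.mem_Ico.mp hr).1 (Finset.mem_Ico.mp hr).2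
  have mid : ∑ r ∈ Finset.Ico (a + 1) c, A r ≤ ∑ r ∈ Finset.Ico (a + 2) (c + 1), B r := by
    rw [show a + 2 = a + 1 + 1 by rfl, ← Finset.sum_Ico_add']
    exact Finset.sum_le_sum fun r hr => h_mid r (Finset.mem_Ico.mp hr).1 (Finset.mem_Ico.mp hr).2
  have hA : ∑ r ∈ Finset.Ico a (c + 2), A r =
      A a + ∑ r ∈ Finset.Ico (a + 1) c, A r + (A c + A (c + 1)) := by
    rw [Finset.sum_Ico_succ_top (by omega), Finset.sum_Ico_succ_top (by omega),
      Finset.sum_eq_sum_Ico_succ_bot (by omega), add_assoc _ (A c)]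
  have hB : ∑ r ∈ Finset.Ico a (c + 2), B r =
      (B a + B (a + 1)) + ∑ r ∈ Finset.Ico (a + 2) (c + 1), B r + B (c + 1) := by
    rw [Finset.sum_Ico_succ_top (by omega), Finset.sum_eq_sum_Ico_succ_bot (by omega),
      Finset.sum_eq_sum_Ico_succ_bot (by omega)]
    ac_rfl
  rw [split A, split B, lo, hi, hA, hB]
  gcongr

theorem mul_abs_sub_le_mul_abs_sub_add_mul_abs_sub {α β u v z : ℝ} (hα : 0 ≤ α) (hαβ : α ≤ β) :
    α * |u - z| ≤ α * |u - v| + β * |v - z| :=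
  calc α * |u - z| ≤ α * (|u - v| + |v - z|) :=
        mul_le_mul_of_nonneg_left (abs_sub_le u v z) hα
    _ ≤ α * |u - v| + β * |v - z| := by
        rw [mul_add]; gcongr

theorem mul_abs_sub_add_mul_abs_sub_le {α β xi xj xk : ℝ} (hij : xi ≤ xj) (hjk : xj ≤ xk)
    (hαβ : α ≤ β) :
    α * |xk - xj| + β * |xj - xi| ≤ β * |xk - xi| := by
  rw [abs_of_nonneg (sub_nonneg.mpr hjk), abs_of_nonneg (sub_nonneg.mpr hij),
    abs_of_nonneg (sub_nonneg.mpr (hij.trans hjk))]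
  nlinarith [mul_le_mul_of_nonneg_right hαβ (sub_nonneg.mpr hjk)]

section Walk

variable {V : Type*} (x w : V → ℝ) (f : ℝ → ℝ)

def collectedWeight (t : ℕ → V) (r : ℕ) : ℝ :=
  ∑ j ∈ Finset.Ioc 0 r, w (t j)

def walkCost (t : ℕ → V) (N : ℕ) : ℝ :=
  ∑ r ∈ Finset.range N, f (collectedWeight w t r) * |x (t r) - x (t (r + 1))|

def closedWalkCost (t : ℕ → V) (N : ℕ) : ℝ :=
  walkCost x w f t N + f (collectedWeight w t N) * |x (t N) - x (t 0)|

variable {x w f}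

theorem collectedWeight_succ (t : ℕ → V) (r : ℕ) :
    collectedWeight w t (r + 1) = collectedWeight w t r + w (t (r + 1)) :=
  Finset.sum_Ioc_succ_top (Nat.zero_le r) _

theorem collectedWeight_mono (hw : ∀ v, 0 ≤ w v) (t : ℕ → V) : Monotone (collectedWeight w t) :=
  fun _ _ h => Finset.sum_le_sum_of_subset_of_nonneg (Finset.Ioc_subset_Ioc_right h)
    fun _ _ _ => hw _

theorem collectedWeight_congr {t t' : ℕ → V} {r : ℕ} (h : ∀ j ≤ r, t' j = t j) :
    collectedWeight w t' r = collectedWeight w t r :=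
  Finset.sum_congr rfl fun j hj => by rw [h j (Finset.mem_Ioc.mp hj).2]

end Walk

section Move

variable {V : Type*}

def moveAfter (t : ℕ → V) (p q : ℕ) : ℕ → V := fun r =>
  if r < p then t r else if r < q then t (r + 1) else if r = q then t p else t r

variable {w : V → ℝ} (t : ℕ → V) {p q r : ℕ}

theorem moveAfter_of_lt (h : r < p) : moveAfter t p q r = t r := by
  simp [moveAfter, h]

theorem moveAfter_of_le_of_lt (hp : p ≤ r) (hq : r < q) : moveAfter t p q r = t (r + 1) := by
  simp [moveAfter, hq, hp.not_gt]

theorem moveAfter_self (hpq : p ≤ q) : moveAfter t p q q = t p := by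
  simp [moveAfter, hpq.not_gt]

theorem moveAfter_of_gt (hpq : p ≤ q) (h : q < r) : moveAfter t p q r = t r := by
  simp [moveAfter, (hpq.trans_lt h).not_gt, h.not_gt, h.ne']

theorem collectedWeight_moveAfter_of_lt (h : r < p) :
    collectedWeight w (moveAfter t p q) r = collectedWeight w t r :=
  collectedWeight_congr fun _ hj => moveAfter_of_lt t (hj.trans_lt h)

theorem collectedWeight_moveAfter_add (hp : 0 < p) (hpr : p ≤ r) (hrq : r < q) :
    collectedWeight w (moveAfter t p q) r + w (t p) = collectedWeight w t (r + 1) := by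
  induction r, hpr using Nat.le_induction with
  | base =>
    obtain ⟨a, rfl⟩ := Nat.exists_eq_add_one_of_ne_zero hp.ne'
    rw [collectedWeight_succ, collectedWeight_succ, collectedWeight_succ,
      collectedWeight_moveAfter_of_lt t (Nat.lt_succ_self a),
      moveAfter_of_le_of_lt t le_rfl hrq]
    ring
  | succ r hpr ih =>
    rw [collectedWeight_succ, collectedWeight_succ (r := r + 1), ← ih (by omega),
      moveAfter_of_le_of_lt t (by omega) hrq]
    ring

theorem collectedWeight_moveAfter_of_ge (hp : 0 < p) (hpq : p < q) (hqr : q ≤ r) :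
    collectedWeight w (moveAfter t p q) r = collectedWeight w t r := by
  induction r, hqr using Nat.le_induction with
  | base =>
    obtain ⟨c, rfl⟩ := Nat.exists_eq_add_one_of_ne_zero (hp.trans hpq).ne'
    rw [collectedWeight_succ, moveAfter_self t hpq.le,
      collectedWeight_moveAfter_add t hp (by omega) (Nat.lt_succ_self c)]
  | succ r hqr ih =>
    rw [collectedWeight_succ, collectedWeight_succ, ih, moveAfter_of_gt t hpq.le (by omega)]

end Move

section Exchange

variable {V : Type*} {x w : V → ℝ} {f : ℝ → ℝ}

theorem closedWalkCost_congr {t t' : ℕ → V} {N : ℕ} (h : ∀ r ≤ N, t' r = t r) :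
    closedWalkCost x w f t' N = closedWalkCost x w f t N := by
  have hC (r : ℕ) (hr : r ≤ N) : collectedWeight w t' r = collectedWeight w t r :=
    collectedWeight_congr fun j hj => h j (hj.trans hr)
  unfold closedWalkCost walkCost
  rw [hC N le_rfl, h N le_rfl, h 0 (Nat.zero_le N)]
  congr 1
  refine Finset.sum_congr rfl fun r hr => ?_
  have hr := Finset.mem_range.mp hr
  rw [hC r hr.le, h r hr.le, h (r + 1) hr]

theorem walkCost_moveAfter_le (hw : ∀ v, 0 ≤ w v) (hf : Monotone f) (hf0 : ∀ y, 0 ≤ f y)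
    (t : ℕ → V) {p q N : ℕ} (hp : 0 < p) (hpq : p < q) (hqN : q < N)
    (hij : x (t (q + 1)) ≤ x (t p)) (hjk : x (t p) ≤ x (t q)) :
    walkCost x w f (moveAfter t p q) N ≤ walkCost x w f t N := by
  obtain ⟨a, rfl⟩ := Nat.exists_eq_add_one_of_ne_zero hp.ne'
  obtain ⟨c, rfl⟩ := Nat.exists_eq_add_one_of_ne_zero (hp.trans hpq).ne'
  have hweight_mid (r : ℕ) (h₁ : a + 1 ≤ r) (h₂ : r < c + 1) :
      collectedWeight w (moveAfter t (a + 1) (c + 1)) r ≤ collectedWeight w t (r + 1) := by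
    rw [← collectedWeight_moveAfter_add t hp h₁ h₂]
    linarith [hw (t (a + 1))]
  apply sum_range_le_of_exchange _ _ (a := a) (c := c) (by omega) hqN
  · intro r hr
    rw [collectedWeight_moveAfter_of_lt t (by omega), moveAfter_of_lt t (by omega),
      moveAfter_of_lt t (by omega)]
  · rw [collectedWeight_moveAfter_of_lt t (by omega), moveAfter_of_lt t (by omega),
      moveAfter_of_le_of_lt t le_rfl (by omega)]
    exact mul_abs_sub_le_mul_abs_sub_add_mul_abs_sub (hf0 _)
      (hf (collectedWeight_mono hw t (Nat.le_succ a)))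
  · intro r h₁ h₂
    rw [moveAfter_of_le_of_lt t (by omega) (by omega),
      moveAfter_of_le_of_lt t (by omega) (by omega)]
    exact mul_le_mul_of_nonneg_right (hf (hweight_mid r (by omega) (by omega))) (abs_nonneg _)
  · rw [moveAfter_of_le_of_lt t (by omega) (by omega), moveAfter_self t hpq.le,
      moveAfter_of_gt t hpq.le (by omega), collectedWeight_moveAfter_of_ge t hp hpq le_rfl]
    exact mul_abs_sub_add_mul_abs_sub_le hij hjk (hf (hweight_mid c (by omega) (by omega)))
  · intro r h₁ h₂
    rw [collectedWeight_moveAfter_of_ge t hp hpq h₁.le, moveAfter_of_gt t hpq.le (by omega),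
      moveAfter_of_gt t hpq.le (by omega)]

theorem closedWalkCost_moveAfter_le (hw : ∀ v, 0 ≤ w v) (hf : Monotone f)
    (hf0 : ∀ y, 0 ≤ f y) (t : ℕ → V) {p q N : ℕ} (hp : 0 < p) (hpq : p < q) (hqN : q < N)
    (hij : x (t (q + 1)) ≤ x (t p)) (hjk : x (t p) ≤ x (t q)) :
    closedWalkCost x w f (moveAfter t p q) N ≤ closedWalkCost x w f t N := by
  unfold closedWalkCost
  rw [collectedWeight_moveAfter_of_ge t hp hpq hqN.le, moveAfter_of_gt t hpq.le hqN,
    moveAfter_of_lt t hp]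
  gcongr
  exact walkCost_moveAfter_le hw hf hf0 t hp hpq hqN hij hjk

end Exchange

section Tour

variable {n : ℕ}

def tourSeq (σ : Equiv.Perm (Fin (n + 1))) (r : ℕ) : Fin (n + 1) :=
  σ (Fin.ofNat (n + 1) r)

theorem tourSeq_val (σ : Equiv.Perm (Fin (n + 1))) (i : Fin (n + 1)) :
    tourSeq σ i.val = σ i := by
  rw [tourSeq, Fin.ofNat_val_eq_self]

theorem tourSeq_of_lt {r : ℕ} (σ : Equiv.Perm (Fin (n + 1))) (h : r < n + 1) :
    tourSeq σ r = σ ⟨r, h⟩ :=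
  tourSeq_val σ ⟨r, h⟩

theorem sum_Ioc_zero_eq_collectedWeight (w : Fin (n + 1) → ℝ) (σ : Equiv.Perm (Fin (n + 1)))
    (b : Fin (n + 1)) :
    ∑ j ∈ Finset.Ioc 0 b, w (σ j) = collectedWeight w (tourSeq σ) b.val := by
  have h : Finset.Ioc 0 b.val = (Finset.Ioc 0 b).map Fin.valEmbedding :=
    (Fin.map_valEmbedding_Ioc 0 b).symm
  simp only [collectedWeight, h, Finset.sum_map, Fin.valEmbedding_apply, tourSeq_val]

theorem pathTourCost_eq_closedWalkCost (x w : Fin (n + 1) → ℝ) (f : ℝ → ℝ)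
    (σ : Equiv.Perm (Fin (n + 1))) :
    pathTourCost n x w f σ = closedWalkCost x w f (tourSeq σ) n := by
  rw [pathTourCost, closedWalkCost, walkCost, ← Fin.sum_univ_eq_sum_range]
  simp only [sum_Ioc_zero_eq_collectedWeight]
  simp only [← tourSeq_val σ, Fin.val_castSucc, Fin.val_succ, Fin.val_last, Fin.val_zero]

theorem tourSeq_eq_moveAfter {π π' : Equiv.Perm (Fin (n + 1))} {p q : Fin (n + 1)}
    (hπ' : ∀ r : Fin (n + 1), π' r =
      if r < p then π r
      else if h : r.val < q.val then π ⟨r.val + 1, by have := q.isLt; omega⟩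
      else if r = q then π p
      else π r)
    (r : ℕ) (hr : r ≤ n) : tourSeq π' r = moveAfter (tourSeq π) p q r := by
  rw [tourSeq_of_lt π' (by omega), hπ', moveAfter, tourSeq_val]
  obtain ⟨p, hp⟩ := p
  obtain ⟨q, hq⟩ := q
  simp only [Fin.mk_lt_mk, Fin.mk.injEq]
  split_ifs <;> first
    | rfl | omega | exact (tourSeq_of_lt π (r := r) (by omega)).symm
    | exact (tourSeq_of_lt π (r := r + 1) (by omega)).symm

end Tour

/-- Exchange argument: deleting the premature visit of `v_j` (at position `p`) and
re-inserting `v_j` immediately after `v_k` (at position `q`) does not increase the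
tour cost, when `x vi ≤ x vj ≤ x vk`, `v_k` is the last node right of `v_j` visited by
`π`, `v_i` is visited immediately after `v_k`, `f` is nondecreasing and weights are
nonnegative. -/
theorem stmt_8 (n : ℕ) (x w : Fin (n + 1) → ℝ) (hw : ∀ v, 0 ≤ w v)
    (f : ℝ → ℝ) (hf : Monotone f) (hf0 : ∀ y, 0 ≤ f y)
    (π π' : Equiv.Perm (Fin (n + 1)))
    (vi vj vk : Fin (n + 1)) (hij : x vi ≤ x vj) (hjk : x vj ≤ x vk)
    (p q : Fin (n + 1)) (hp0 : 0 < p) (hpq : p < q) (hq : q.val + 1 ≤ n)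
    (hπp : π p = vj) (hπq : π q = vk)
    (hπq1 : π ⟨q.val + 1, by omega⟩ = vi)
    (hπ' : ∀ r : Fin (n + 1), π' r =
      if r < p then π r
      else if h : r.val < q.val then π ⟨r.val + 1, by have := q.isLt; omega⟩
      else if r = q then vj
      else π r) :
    pathTourCost n x w f π' ≤ pathTourCost n x w f π := by
  subst hπp hπq hπq1
  rw [pathTourCost_eq_closedWalkCost, pathTourCost_eq_closedWalkCost,
    closedWalkCost_congr (tourSeq_eq_moveAfter hπ')]
  simp only [← tourSeq_val] at hij hjk
  exact closedWalkCost_moveAfter_le hw hf hf0 _ hp0 hpq hq hij hjk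
end

section
/- Let g(v_i, v_j, s, t) denote the minimum cost of collecting all nodes in interval [v_i, v_j] of a path, starting at s ∈ {v_i, v_j} (whose weight is already collected), ending by traveling to t, where the weight collected before entering [v_i, v_j] is w = ∑_{ℓ<i} w_ℓ + ∑_{ℓ>j} w_ℓ, restricted to tours that always next visit the leftmost or rightmost remaining node. Then for i < j and s = v_i: g(v_i,v_j,v_i,t) = min( f(w+w_i)·d(v_i,v_{i+1}) + g(v_{i+1},v_j,v_{i+1},t), f(w+w_i)·d(v_i,v_j) + g(v_{i+1},v_j,v_j,t) ), and symmetrically for s = v_j. -/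
/-!
Splitting the choice sequences of length `j - i` by their head splits the infimum defining
`gDP` into a minimum of two infima over the tails, each shifted by the cost of the first move.
The shift commutes with `sInf` because costs are nonnegative, so every infimum is taken over a
nonempty set bounded below.
-/
/-- Cost of the restricted tour on the interval `[i, j]` of a path determined by the
choice sequence `bs` (`true` = next go to the leftmost remaining node, `false` = to the
rightmost). State: current interval `[i, j]`, current node `cur ∈ {i, j}` whose weight
has just been collected, `acc` = weight collected outside `[i,j]` plus previously
collected interval nodes except `cur`. When the interval is exhausted, travel to the
end node at coordinate `xt` carrying the total weight `Wtot` of all nodes. -/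
noncomputable def restrictedCost (f : ℝ → ℝ) (x w : ℕ → ℝ) (xt Wtot : ℝ) :
    ℕ → ℕ → ℕ → ℝ → List Bool → ℝ
  | _, _, cur, _, [] => |x cur - xt| * f Wtot
  | i, j, cur, acc, b :: bs =>
      if cur = i then
        let nxt : ℕ := if b then i + 1 else j
        f (acc + w i) * |x i - x nxt| + restrictedCost f x w xt Wtot (i + 1) j nxt (acc + w i) bs
      else
        let nxt : ℕ := if b then i else j - 1
        f (acc + w j) * |x j - x nxt| + restrictedCost f x w xt Wtot i (j - 1) nxt (acc + w j) bs

/-- `g(v_i, v_j, s, t)`: minimum cost, over all restricted (leftmost-or-rightmost) tours,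
of collecting all nodes of `[i, j]` starting at `cur ∈ {i, j}` with outside weight `acc`,
ending at the node with coordinate `xt`. -/
noncomputable def gDP (f : ℝ → ℝ) (x w : ℕ → ℝ) (xt Wtot : ℝ) (i j cur : ℕ) (acc : ℝ) : ℝ :=
  sInf ((fun bs => restrictedCost f x w xt Wtot i j cur acc bs) ''
    { bs : List Bool | bs.length = j - i })

lemma setOf_length_eq_succ (k : ℕ) :
    {bs : List Bool | bs.length = k + 1} =
      List.cons true '' {bs | bs.length = k} ∪ List.cons false '' {bs | bs.length = k} := by
  ext bs
  cases bs with
  | nil => simp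
  | cons b t => cases b <;> simp

lemma sInf_image_length_succ (G G₁ G₂ : List Bool → ℝ) (c₁ c₂ : ℝ) (k : ℕ)
    (hG₁ : ∀ bs, G (true :: bs) = c₁ + G₁ bs) (hG₂ : ∀ bs, G (false :: bs) = c₂ + G₂ bs)
    (hb₁ : BddBelow (Set.range G₁)) (hb₂ : BddBelow (Set.range G₂)) :
    sInf (G '' {bs | bs.length = k + 1}) =
      min (c₁ + sInf (G₁ '' {bs | bs.length = k})) (c₂ + sInf (G₂ '' {bs | bs.length = k})) := by
  set S : Set (List Bool) := {bs | bs.length = k}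
  have hS : S.Nonempty := ⟨List.replicate k true, List.length_replicate⟩
  have hsplit : G '' {bs | bs.length = k + 1} =
      (c₁ + ·) '' (G₁ '' S) ∪ (c₂ + ·) '' (G₂ '' S) := by
    simp only [setOf_length_eq_succ, Set.image_union, Set.image_image, hG₁, hG₂, S]
  have hshift (c : ℝ) {T : Set ℝ} (hT : T.Nonempty) (hb : BddBelow T) :
      sInf ((c + ·) '' T) = c + sInf T :=
    ((OrderIso.addLeft c).map_csInf' hT hb).symm
  have hbdd (c : ℝ) {T : Set ℝ} (hb : BddBelow T) : BddBelow ((c + ·) '' T) :=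
    (OrderIso.addLeft c).monotone.map_bddBelow hb
  have hbS₁ : BddBelow (G₁ '' S) := hb₁.mono (Set.image_subset_range _ _)
  have hbS₂ : BddBelow (G₂ '' S) := hb₂.mono (Set.image_subset_range _ _)
  rw [hsplit, csInf_union (hbdd c₁ hbS₁) ((hS.image _).image _)
      (hbdd c₂ hbS₂) ((hS.image _).image _),
    hshift c₁ (hS.image _) hbS₁, hshift c₂ (hS.image _) hbS₂]

lemma restrictedCost_nonneg (f : ℝ → ℝ) (hf0 : ∀ y, 0 ≤ f y) (x w : ℕ → ℝ) (xt Wtot : ℝ)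
    (bs : List Bool) (i j cur : ℕ) (acc : ℝ) :
    0 ≤ restrictedCost f x w xt Wtot i j cur acc bs := by
  induction bs generalizing i j cur acc with
  | nil => exact mul_nonneg (abs_nonneg _) (hf0 _)
  | cons b t ih =>
    simp only [restrictedCost]
    split <;> exact add_nonneg (mul_nonneg (hf0 _) (abs_nonneg _)) (ih _ _ _ _)

lemma bddBelow_range_restrictedCost (f : ℝ → ℝ) (hf0 : ∀ y, 0 ≤ f y) (x w : ℕ → ℝ)
    (xt Wtot : ℝ) (i j cur : ℕ) (acc : ℝ) :
    BddBelow (Set.range (restrictedCost f x w xt Wtot i j cur acc)) :=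
  ⟨0, by rintro _ ⟨bs, rfl⟩; exact restrictedCost_nonneg f hf0 x w xt Wtot bs i j cur acc⟩

lemma gDP_left_eq_min (f : ℝ → ℝ) (hf0 : ∀ y, 0 ≤ f y) (x w : ℕ → ℝ) (xt Wtot : ℝ)
    {i j : ℕ} (hij : i < j) (acc : ℝ) :
    gDP f x w xt Wtot i j i acc =
      min (f (acc + w i) * |x i - x (i + 1)| + gDP f x w xt Wtot (i + 1) j (i + 1) (acc + w i))
          (f (acc + w i) * |x i - x j| + gDP f x w xt Wtot (i + 1) j j (acc + w i)) := by
  obtain ⟨k, hk, hk'⟩ : ∃ k, j - i = k + 1 ∧ j - (i + 1) = k := ⟨j - (i + 1), by omega, rfl⟩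
  unfold gDP
  rw [hk, hk']
  exact sInf_image_length_succ _ _ _ _ _ k (fun bs => by simp [restrictedCost])
    (fun bs => by simp [restrictedCost]) (bddBelow_range_restrictedCost f hf0 x w xt Wtot ..)
    (bddBelow_range_restrictedCost f hf0 x w xt Wtot ..)

lemma gDP_right_eq_min (f : ℝ → ℝ) (hf0 : ∀ y, 0 ≤ f y) (x w : ℕ → ℝ) (xt Wtot : ℝ)
    {i j : ℕ} (hij : i < j) (acc : ℝ) :
    gDP f x w xt Wtot i j j acc =
      min (f (acc + w j) * |x j - x (j - 1)| + gDP f x w xt Wtot i (j - 1) (j - 1) (acc + w j))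
          (f (acc + w j) * |x j - x i| + gDP f x w xt Wtot i (j - 1) i (acc + w j)) := by
  obtain ⟨k, hk, hk'⟩ : ∃ k, j - i = k + 1 ∧ j - 1 - i = k := ⟨j - 1 - i, by omega, rfl⟩
  have hji : j ≠ i := hij.ne'
  unfold gDP
  rw [hk, hk', min_comm]
  exact sInf_image_length_succ _ _ _ _ _ k (fun bs => by simp [restrictedCost, hji])
    (fun bs => by simp [restrictedCost, hji]) (bddBelow_range_restrictedCost f hf0 x w xt Wtot ..)
    (bddBelow_range_restrictedCost f hf0 x w xt Wtot ..)

theorem stmt_9_general (x w : ℕ → ℝ)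
    (f : ℝ → ℝ) (hf0 : ∀ y, 0 ≤ f y) (xt : ℝ)
    (Wtot : ℝ)
    (i j : ℕ) (hij : i < j)
    (acc : ℝ) :
    gDP f x w xt Wtot i j i acc =
      min (f (acc + w i) * |x i - x (i + 1)| + gDP f x w xt Wtot (i + 1) j (i + 1) (acc + w i))
          (f (acc + w i) * |x i - x j| + gDP f x w xt Wtot (i + 1) j j (acc + w i)) ∧
    gDP f x w xt Wtot i j j acc =
      min (f (acc + w j) * |x j - x (j - 1)| + gDP f x w xt Wtot i (j - 1) (j - 1) (acc + w j))
          (f (acc + w j) * |x j - x i| + gDP f x w xt Wtot i (j - 1) i (acc + w j)) :=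
  ⟨gDP_left_eq_min f hf0 x w xt Wtot hij acc, gDP_right_eq_min f hf0 x w xt Wtot hij acc⟩

/-- Bellman recurrence of the path-metric DP: for `i < j`, from `s = v_i` the optimum
either moves to the adjacent node `v_{i+1}` or to the opposite end `v_j`, and
symmetrically from `s = v_j`; the outside weight is `w = ∑_{ℓ<i} w_ℓ + ∑_{ℓ>j} w_ℓ`. -/
theorem stmt_9 (n : ℕ) (x w : ℕ → ℝ) (hx : Monotone x) (hw : ∀ ℓ, 0 ≤ w ℓ)
    (f : ℝ → ℝ) (hf : Monotone f) (hf0 : ∀ y, 0 ≤ f y) (xt : ℝ)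
    (Wtot : ℝ) (hWtot : Wtot = ∑ ℓ ∈ Finset.range n, w ℓ)
    (i j : ℕ) (hij : i < j) (hjn : j < n)
    (acc : ℝ) (hacc : acc = (∑ ℓ ∈ Finset.range i, w ℓ) + ∑ ℓ ∈ Finset.Ioo j n, w ℓ) :
    gDP f x w xt Wtot i j i acc =
      min (f (acc + w i) * |x i - x (i + 1)| + gDP f x w xt Wtot (i + 1) j (i + 1) (acc + w i))
          (f (acc + w i) * |x i - x j| + gDP f x w xt Wtot (i + 1) j j (acc + w i)) ∧
    gDP f x w xt Wtot i j j acc =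
      min (f (acc + w j) * |x j - x (j - 1)| + gDP f x w xt Wtot i (j - 1) (j - 1) (acc + w j))
          (f (acc + w j) * |x j - x i| + gDP f x w xt Wtot i (j - 1) i (acc + w j)) :=
  stmt_9_general x w f hf0 xt Wtot i j hij acc
end

section
/- For the star-metric W-TSP, let π* be an optimal tour and π any tour, both starting and ending at the center. If D^π(w) ≤ c·D^{π*}(w) for every weight threshold w, then the total cost T(π) ≤ 2c·T(π*). -/
/-!
Layer-cake argument. On a finite set of accumulated weights, a monotone nonnegative `f` agrees
with a nonnegative combination of threshold indicators `t ≤ ·` and dominates it everywhere.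
Hence, after summing against the round-trip lengths, `T(π)` equals and `T(π*)` dominates the
same nonnegative combination of the values `D(t)`, so `D^π ≤ c·D^{π*}` gives
`T(π) ≤ c·T(π*)`. Evaluating the hypothesis at `w = 0`, where every leaf counts, gives `c ≥ 1`.
-/

/-- `D^σ(w')` for a star tour `σ` (see stmt_11). -/
noncomputable def Dthresh (N : ℕ) (d wt : Fin N → ℝ) (σ : Equiv.Perm (Fin N)) (w' : ℝ) : ℝ :=
  ∑ k ∈ Finset.univ.filter (fun k : Fin N => w' ≤ ∑ j ∈ Finset.Iic k, wt (σ j)),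
    2 * d (σ k)

/-- Total cost of a star tour `σ` starting and ending at the center: each leaf is visited
by a round trip of length `2·d v`, charged at rate `f` of the accumulated weight on the
return leg. -/
noncomputable def Tstar (N : ℕ) (d wt : Fin N → ℝ) (f : ℝ → ℝ) (σ : Equiv.Perm (Fin N)) : ℝ :=
  ∑ k : Fin N, 2 * d (σ k) * f (∑ j ∈ Finset.Iic k, wt (σ j))

open Finset

noncomputable def superlevelMass {ι : Type*} [Fintype ι] (ℓ x : ι → ℝ) (w : ℝ) : ℝ :=
  ∑ k ∈ univ.filter (fun k => w ≤ x k), ℓ k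

theorem Monotone.exists_nonneg_step_sum_eq_on {g : ℝ → ℝ} (hg : Monotone g)
    (hg0 : ∀ y, 0 ≤ g y) (T : Finset ℝ) :
    ∃ α : ℝ → ℝ, (∀ t, 0 ≤ α t) ∧
      (∀ y, ∑ t ∈ T, (if t ≤ y then α t else 0) ≤ g y) ∧
      ∀ y ∈ T, ∑ t ∈ T, (if t ≤ y then α t else 0) = g y := by
  induction T using Finset.induction_on_max with
  | empty => exact ⟨0, fun _ => le_rfl, fun y => by simpa using hg0 y, by simp⟩
  | insert m T hlt ih =>
    -- The new largest threshold `m` gets the coefficient `g m - s m ≥ 0`; every older indicator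
    -- is already on at `m`, so the sum becomes `g m` from `m` on and is unchanged below it.
    obtain ⟨α, hα0, hle, heq⟩ := ih
    set s : ℝ → ℝ := fun y => ∑ t ∈ T, if t ≤ y then α t else 0
    have hm : m ∉ T := fun h => lt_irrefl m (hlt m h)
    have hsum : ∀ y, ∑ t ∈ insert m T,
        (if t ≤ y then Function.update α m (g m - s m) t else 0) =
          (if m ≤ y then g m - s m else 0) + s y := by
      intro y
      rw [sum_insert hm, Function.update_self]
      refine congrArg _ (sum_congr rfl fun t ht => ?_)
      rw [Function.update_of_ne (ne_of_mem_of_not_mem ht hm)]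
    have hstable : ∀ y, m ≤ y → s y = s m := fun y hmy =>
      sum_congr rfl fun t ht => by
        rw [if_pos ((hlt t ht).le.trans hmy), if_pos (hlt t ht).le]
    refine ⟨Function.update α m (g m - s m), fun t => ?_, fun y => ?_, fun y hy => ?_⟩
    · rcases eq_or_ne t m with rfl | htm
      · simpa using hle t
      · simpa [Function.update_of_ne htm] using hα0 t
    · rw [hsum]
      split_ifs with hmy
      · linarith [hstable y hmy, hg hmy]
      · simpa using hle y
    · rw [hsum]
      rcases mem_insert.1 hy with rfl | hyT
      · simp
      · rw [if_neg (not_le.2 (hlt y hyT)), zero_add]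
        exact heq y hyT

theorem sum_mul_step_sum_eq {ι : Type*} [Fintype ι] (ℓ x : ι → ℝ) (α : ℝ → ℝ)
    (T : Finset ℝ) :
    ∑ k, ℓ k * ∑ t ∈ T, (if t ≤ x k then α t else 0) =
      ∑ t ∈ T, α t * superlevelMass ℓ x t := by
  simp only [superlevelMass, sum_filter, mul_sum]
  rw [sum_comm]
  exact sum_congr rfl fun t _ => sum_congr rfl fun k _ => by split_ifs <;> ring

theorem sum_mul_le_mul_sum_of_superlevelMass_le {ι κ : Type*} [Fintype ι] [Fintype κ]
    {ℓ x : ι → ℝ} {ℓ' x' : κ → ℝ} {g : ℝ → ℝ} (hg : Monotone g) (hg0 : ∀ y, 0 ≤ g y)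
    (hℓ' : ∀ k, 0 ≤ ℓ' k) {c : ℝ} (hc : 0 ≤ c)
    (hmass : ∀ w, superlevelMass ℓ x w ≤ c * superlevelMass ℓ' x' w) :
    ∑ k, ℓ k * g (x k) ≤ c * ∑ k, ℓ' k * g (x' k) := by
  classical
  set T := univ.image x
  obtain ⟨α, hα0, hle, heq⟩ := hg.exists_nonneg_step_sum_eq_on hg0 T
  calc ∑ k, ℓ k * g (x k)
      = ∑ k, ℓ k * ∑ t ∈ T, (if t ≤ x k then α t else 0) :=
        sum_congr rfl fun k _ => by rw [heq _ (mem_image_of_mem x (mem_univ k))]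
    _ = ∑ t ∈ T, α t * superlevelMass ℓ x t := sum_mul_step_sum_eq ℓ x α T
    _ ≤ ∑ t ∈ T, α t * (c * superlevelMass ℓ' x' t) :=
        sum_le_sum fun t _ => mul_le_mul_of_nonneg_left (hmass t) (hα0 t)
    _ = c * ∑ t ∈ T, α t * superlevelMass ℓ' x' t := by
        rw [mul_sum]; exact sum_congr rfl fun t _ => by ring
    _ = c * ∑ k, ℓ' k * ∑ t ∈ T, (if t ≤ x' k then α t else 0) := by
        rw [sum_mul_step_sum_eq]
    _ ≤ c * ∑ k, ℓ' k * g (x' k) :=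
        mul_le_mul_of_nonneg_left
          (sum_le_sum fun k _ => mul_le_mul_of_nonneg_left (hle _) (hℓ' k)) hc

theorem Dthresh_of_nonpos {N : ℕ} {d wt : Fin N → ℝ} (hw : ∀ v, 0 ≤ wt v)
    (σ : Equiv.Perm (Fin N)) {w' : ℝ} (hw' : w' ≤ 0) :
    Dthresh N d wt σ w' = ∑ v, 2 * d v := by
  rw [Dthresh, filter_true_of_mem fun k _ => hw'.trans (sum_nonneg fun j _ => hw (σ j))]
  exact Equiv.sum_comp σ (fun v => 2 * d v)

theorem stmt_12_general (N : ℕ) (d wt : Fin N → ℝ) (hd : ∀ v, 1 ≤ d v) (hw : ∀ v, 0 ≤ wt v)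
    (f : ℝ → ℝ) (hf : Monotone f) (hf0 : ∀ y, 0 ≤ f y)
    (π πstar : Equiv.Perm (Fin N))
    (c : ℝ) (hc : ∀ w' : ℝ, Dthresh N d wt π w' ≤ c * Dthresh N d wt πstar w') :
    Tstar N d wt f π ≤ 2 * c * Tstar N d wt f πstar := by
  rcases isEmpty_or_nonempty (Fin N) with hN | hN
  · simp [Tstar]
  have hlen : ∀ v, 0 < 2 * d v := fun v => by linarith [hd v]
  have hc1 : 1 ≤ c := by
    have htotal : 0 < ∑ v, 2 * d v := sum_pos (fun v _ => hlen v) univ_nonempty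
    have h := hc 0
    rw [Dthresh_of_nonpos hw π le_rfl, Dthresh_of_nonpos hw πstar le_rfl] at h
    nlinarith
  have hTstar : 0 ≤ Tstar N d wt f πstar :=
    sum_nonneg fun k _ => mul_nonneg (hlen _).le (hf0 _)
  -- `Dthresh` and `Tstar` unfold to `superlevelMass` and the weighted sum for the round-trip
  -- lengths `2 * d (σ k)` and accumulated weights `∑ j ∈ Iic k, wt (σ j)`.
  calc Tstar N d wt f π ≤ c * Tstar N d wt f πstar :=
        sum_mul_le_mul_sum_of_superlevelMass_le hf hf0 (fun k => (hlen _).le) (by linarith) hc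
    _ ≤ 2 * c * Tstar N d wt f πstar := by nlinarith

/-- If `D^π(w') ≤ c·D^{π*}(w')` for every threshold `w'`, where `π*` is an optimal star
tour, then `T(π) ≤ 2c·T(π*)`. -/
theorem stmt_12 (N : ℕ) (d wt : Fin N → ℝ) (hd : ∀ v, 1 ≤ d v) (hw : ∀ v, 0 ≤ wt v)
    (f : ℝ → ℝ) (hf : Monotone f) (hf0 : ∀ y, 0 ≤ f y)
    (π πstar : Equiv.Perm (Fin N))
    (hopt : ∀ σ : Equiv.Perm (Fin N), Tstar N d wt f πstar ≤ Tstar N d wt f σ)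
    (c : ℝ) (hc : ∀ w' : ℝ, Dthresh N d wt π w' ≤ c * Dthresh N d wt πstar w') :
    Tstar N d wt f π ≤ 2 * c * Tstar N d wt f πstar :=
  stmt_12_general N d wt hd hw f hf hf0 π πstar c hc
end
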